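/- arXiv:1604.03924 — 3 statements merged into one kernel-verified Lean document; each statement's English description precedes it below -/
import Mathlib

section
/- There is an absolute constant C > 0 such that the following holds. Let X be a countable data domain, A : X^n → Y an (ε,δ)-differentially private algorithm, and X = (X₁,…,X_n) ~ P^n, with ε ∈ (0, 1/2] and δ̂ ∈ (0, ε/15]. Define Z_i(a, x₁^i) = log₂( Pr[X_i = x_i | A(X) = a, X₁^{i−1} = x₁^{i−1}] / Pr[X_i = x_i] ). Then for every pair (a, x₁^{i−1}) ∈ E_i(δ̂), the conditional expectation E[ Z_i(A(X), X₁^i) | A(X) = a, X₁^{i−1} = x₁^{i−1}, (A(X), X₁^i) ∈ F_i ] ≤ C·( ε² + δ̂/ε ). -/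
open scoped ENNReal

/-- The probability that a sample from the probability mass function `μ` lands in `S`. -/
noncomputable def prob {α : Type*} (μ : PMF α) (S : Set α) : ℝ :=
  (μ.toOuterMeasure S).toReal

/-- The independent coupling of two distributions: a pair whose components are independent
with the given marginal distributions. -/
noncomputable def indepPair {α β : Type*} (p : PMF α) (q : PMF β) : PMF (α × β) :=
  p.bind fun a => q.map fun b => (a, b)

/-- `MaxInfoLe μ b k` : the `b`-approximate max-information of the joint distribution `μ`
is at most `k` (measured in bits):  for every event `O` with `Pr[(X,Z) ∈ O] > b`,
`Pr[(X,Z) ∈ O] - b ≤ 2^k · Pr[X ⊗ Z ∈ O]`. -/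
def MaxInfoLe {α β : Type*} (μ : PMF (α × β)) (b k : ℝ) : Prop :=
  ∀ O : Set (α × β), b < prob μ O →
    prob μ O - b ≤ 2 ^ k * prob (indepPair (μ.map Prod.fst) (μ.map Prod.snd)) O

/-- The `n`-fold product (i.i.d.) distribution `P^n` on datasets of size `n`. -/
noncomputable def iidPMF {X : Type*} (P : PMF X) : (n : ℕ) → PMF (Fin n → X)
  | 0 => PMF.pure (fun i => i.elim0)
  | n + 1 => P.bind fun a => (iidPMF P n).map fun x => Fin.cons a x

/-- The joint distribution of `(X, A(X))` where `X ∼ μ` and `A` is a randomized algorithm. -/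
noncomputable def jointPMF {D Y : Type*} (μ : PMF D) (A : D → PMF Y) : PMF (D × Y) :=
  μ.bind fun x => (A x).map fun y => (x, y)
/-- Two datasets are neighboring if they differ in at most one entry. -/
def Neighbor {X : Type*} {n : ℕ} (x x' : Fin n → X) : Prop :=
  ∃ i : Fin n, ∀ j : Fin n, j ≠ i → x j = x' j

/-- `(ε,δ)`-differential privacy of a randomized algorithm `A` on datasets of size `n`. -/
def DiffPrivate {X Y : Type*} {n : ℕ} (A : (Fin n → X) → PMF Y) (ε δ : ℝ) : Prop :=
  ∀ x x' : Fin n → X, Neighbor x x' → ∀ O : Set Y,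
    prob (A x) O ≤ Real.exp ε * prob (A x') O + δ

/-- `PrefixEq i w x` : the dataset `x` agrees with `w` on all coordinates before `i`
(i.e. `x` has prefix `x₁^{i-1} = w₁^{i-1}`). -/
def PrefixEq {X : Type*} {n : ℕ} (i : Fin n) (w x : Fin n → X) : Prop :=
  ∀ j : Fin n, (j : ℕ) < (i : ℕ) → x j = w j

/-- The conditional probability `Pr[X_i ∈ O | A(X) = a, X₁^{i-1} = w₁^{i-1}]`, computed from the
joint distribution `μ` of the pair `(X, A(X))`. -/
noncomputable def condXi {X Y : Type*} {n : ℕ} (μ : PMF ((Fin n → X) × Y)) (i : Fin n)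
    (a : Y) (w : Fin n → X) (O : Set X) : ℝ :=
  prob μ {p | p.2 = a ∧ PrefixEq i w p.1 ∧ p.1 i ∈ O} /
    prob μ {p | p.2 = a ∧ PrefixEq i w p.1}

/-- `(ε,δ)`-indistinguishability of two distributions presented as set functions. -/
def IndistFn {D : Type*} (F G : Set D → ℝ) (ε δ : ℝ) : Prop :=
  ∀ O : Set D, F O ≤ Real.exp ε * G O + δ ∧ G O ≤ Real.exp ε * F O + δ

/-- The set `E_i(δ̂)` of "good" output/prefix pairs `(a, x₁^{i-1})`: those for which the marginal
distribution of `X_i` is `(3ε, δ̂)`-indistinguishable from the conditional distribution of `X_i`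
given `A(X) = a` and `X₁^{i-1} = x₁^{i-1}`. -/
def Eset {X Y : Type*} {n : ℕ} (μ : PMF ((Fin n → X) × Y)) (P : PMF X) (i : Fin n)
    (ε δhat : ℝ) : Set (Y × (Fin n → X)) :=
  {q | IndistFn (fun O => prob P O) (fun O => condXi μ i q.1 q.2 O) (3 * ε) δhat}

/-- The set `F_i` of output/prefix pairs `(a, x₁^i)` for which the likelihood ratio
`Pr[X_i = x_i | a, x₁^{i-1}] / Pr[X_i = x_i]` lies in `[e^{-6ε}, e^{6ε}]`. -/
def Fset {X Y : Type*} {n : ℕ} (μ : PMF ((Fin n → X) × Y)) (P : PMF X) (i : Fin n)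
    (ε : ℝ) : Set (Y × (Fin n → X)) :=
  {q | Real.exp (-(6 * ε)) ≤ condXi μ i q.1 q.2 {q.2 i} / (P (q.2 i)).toReal ∧
       condXi μ i q.1 q.2 {q.2 i} / (P (q.2 i)).toReal ≤ Real.exp (6 * ε)}

/-- `Z_i(a, x₁^i) = log₂( Pr[X_i = x_i | a, x₁^{i-1}] / Pr[X_i = x_i] )`. -/
noncomputable def Zi {X Y : Type*} {n : ℕ} (μ : PMF ((Fin n → X) × Y)) (P : PMF X)
    (i : Fin n) (q : Y × (Fin n → X)) : ℝ :=
  Real.logb 2 (condXi μ i q.1 q.2 {q.2 i} / (P (q.2 i)).toReal)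

/-- The set `G_i(δ̂)` of "good" tuples: `(a, x₁^{i-1}) ∈ E_i(δ̂)` and `(a, x₁^i) ∈ F_i`. -/
def Gset {X Y : Type*} {n : ℕ} (μ : PMF ((Fin n → X) × Y)) (P : PMF X) (i : Fin n)
    (ε δhat : ℝ) : Set (Y × (Fin n → X)) :=
  {q | q ∈ Eset μ P i ε δhat ∧ q ∈ Fset μ P i ε}

/-- `G_{≤ i}(δ̂)` : membership in `G_j(δ̂)` for every `j ≤ i`. -/
def GleSet {X Y : Type*} {n : ℕ} (μ : PMF ((Fin n → X) × Y)) (P : PMF X) (i : Fin n)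
    (ε δhat : ℝ) : Set (Y × (Fin n → X)) :=
  {q | ∀ j : Fin n, j ≤ i → q ∈ Gset μ P j ε δhat}

/-- `T_i(a, x₁^i)` equals `Z_i(a, x₁^i)` on the good set `G_{≤ i}(δ̂)` and `0` otherwise. -/
noncomputable def Ti {X Y : Type*} {n : ℕ} (μ : PMF ((Fin n → X) × Y)) (P : PMF X)
    (i : Fin n) (ε δhat : ℝ) : (Y × (Fin n → X)) → ℝ :=
  (GleSet μ P i ε δhat).indicator (Zi μ P i)

section toolkit
variable {X : Type*} {g : X → ℝ} {S T : Set X}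

lemma tsum_ind_nonneg (hg0 : ∀ v, 0 ≤ g v) : 0 ≤ ∑' v, S.indicator g v :=
  tsum_nonneg fun v => Set.indicator_nonneg (fun a _ => hg0 a) v

lemma tsum_ind_mono (hg0 : ∀ v, 0 ≤ g v) (hgs : Summable g) (hST : S ⊆ T) :
    ∑' v, S.indicator g v ≤ ∑' v, T.indicator g v := by
  refine Summable.tsum_le_tsum (fun v => ?_) (hgs.indicator S) (hgs.indicator T)
  by_cases hv : v ∈ S
  · rw [Set.indicator_of_mem hv, Set.indicator_of_mem (hST hv)]
  · rw [Set.indicator_of_notMem hv]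
    exact Set.indicator_nonneg (fun a _ => hg0 a) v

lemma tsum_ind_union_le (hg0 : ∀ v, 0 ≤ g v) (hgs : Summable g) :
    ∑' v, (S ∪ T).indicator g v ≤ (∑' v, S.indicator g v) + ∑' v, T.indicator g v := by
  calc ∑' v, (S ∪ T).indicator g v ≤ ∑' v, (S.indicator g v + T.indicator g v) := by
        refine Summable.tsum_le_tsum (fun v => ?_) (hgs.indicator _) ((hgs.indicator S).add (hgs.indicator T))
        by_cases hS : v ∈ S
        · by_cases hT : v ∈ T
          · simp [Set.indicator_of_mem, hS, hT, Set.indicator_of_mem (Set.mem_union_left T hS), hg0 v]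
          · simp [Set.indicator_of_mem hS, Set.indicator_of_notMem hT,
              Set.indicator_of_mem (Set.mem_union_left T hS)]
        · by_cases hT : v ∈ T
          · simp [Set.indicator_of_notMem hS, Set.indicator_of_mem hT,
              Set.indicator_of_mem (Set.mem_union_right S hT)]
          · simp [Set.indicator_of_notMem hS, Set.indicator_of_notMem hT,
              Set.indicator_of_notMem (show v ∉ S ∪ T from fun h => h.elim hS hT)]
    _ = (∑' v, S.indicator g v) + ∑' v, T.indicator g v :=
        Summable.tsum_add (hgs.indicator S) (hgs.indicator T)

lemma tsum_ind_le_tsum (hg0 : ∀ v, 0 ≤ g v) (hgs : Summable g) :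
    ∑' v, S.indicator g v ≤ ∑' v, g v := by
  refine Summable.tsum_le_tsum (fun v => Set.indicator_le_self' (fun x _ => hg0 x) v) (hgs.indicator S) hgs

end toolkit

set_option maxHeartbeats 2000000 in
lemma core_lemma {X : Type*} (p q : X → ℝ) (ε δhat : ℝ)
    (hε : 0 < ε) (hε2 : ε ≤ 1/2) (hδ : 0 < δhat) (hδε : δhat ≤ ε/15)
    (hp0 : ∀ v, 0 ≤ p v) (hq0 : ∀ v, 0 ≤ q v)
    (hps : Summable p) (hqs : Summable q)
    (hp1 : ∑' v, p v = 1) (hq1 : ∑' v, q v = 1)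
    (hind : ∀ S : Set X,
      (∑' v, S.indicator q v) ≤ Real.exp (3*ε) * (∑' v, S.indicator p v) + δhat ∧
      (∑' v, S.indicator p v) ≤ Real.exp (3*ε) * (∑' v, S.indicator q v) + δhat) :
    (∑' v, ({v | Real.exp (-(6*ε)) ≤ p v / q v ∧ p v / q v ≤ Real.exp (6*ε)} : Set X).indicator
        (fun v => Real.logb 2 (p v / q v) * p v) v) /
      (∑' v, ({v | Real.exp (-(6*ε)) ≤ p v / q v ∧ p v / q v ≤ Real.exp (6*ε)} : Set X).indicator p v)
      ≤ 50000 * (ε^2 + δhat / ε) := by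
  set r : X → ℝ := fun v => p v / q v with hr
  set F : Set X := {v | Real.exp (-(6*ε)) ≤ r v ∧ r v ≤ Real.exp (6*ε)} with hF
  set K : ℝ := δhat / ε with hKdef
  have hK0 : 0 < K := div_pos hδ hε
  have hK15 : K ≤ 1/15 := by
    rw [hKdef, div_le_iff₀ hε]; linarith
  have hδ30 : δhat ≤ 1/30 := by linarith
  -- numeric facts
  have hexp1 : Real.exp 1 < 2.7182818286 := Real.exp_one_lt_d9
  have hexp3 : Real.exp (3*ε) ≤ (37/5) := by
    have h1 : Real.exp (3*ε) ≤ Real.exp 2 := Real.exp_le_exp.mpr (by linarith)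
    have h2 : Real.exp 2 = Real.exp 1 * Real.exp 1 := by
      rw [← Real.exp_add]; norm_num
    nlinarith [Real.exp_pos 1]
  have hexp6 : Real.exp (6*ε) ≤ (201/10) := by
    have h1 : Real.exp (6*ε) ≤ Real.exp 3 := Real.exp_le_exp.mpr (by linarith)
    have h2 : Real.exp 3 = Real.exp 1 * Real.exp 1 * Real.exp 1 := by
      rw [← Real.exp_add, ← Real.exp_add]; norm_num
    nlinarith [Real.exp_pos 1]
  have hexp3lb : 1 + 3*ε ≤ Real.exp (3*ε) := by
    have := Real.add_one_le_exp (3*ε); linarith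
  have hexp6lb : 1 + 6*ε ≤ Real.exp (6*ε) := by
    have := Real.add_one_le_exp (6*ε); linarith
  have hl2 : (0.6931471803 : ℝ) < Real.log 2 := Real.log_two_gt_d9
  have hl2pos : 0 < Real.log 2 := by linarith
  -- on F, q is positive and p = r * q
  have hqFpos : ∀ v ∈ F, 0 < q v := by
    intro v hv
    rcases (hq0 v).lt_or_eq with h | h
    · exact h
    · exfalso
      have hr0 : r v = 0 := by rw [hr]; simp [← h]
      have := hv.1
      rw [hr0] at this
      exact absurd this (not_le.mpr (Real.exp_pos _))
  have hpF : ∀ v ∈ F, p v = r v * q v := by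
    intro v hv
    rw [hr]
    field_simp [(hqFpos v hv).ne']
  set pS : Set X → ℝ := fun S => ∑' v, S.indicator p v with hpS
  set qS : Set X → ℝ := fun S => ∑' v, S.indicator q v with hqS
  have hpS0 : ∀ S, 0 ≤ pS S := fun S => tsum_ind_nonneg hp0
  have hqS0 : ∀ S, 0 ≤ qS S := fun S => tsum_ind_nonneg hq0
  have hpS1 : ∀ S, pS S ≤ 1 := fun S => hp1 ▸ tsum_ind_le_tsum hp0 hps
  have hqS1 : ∀ S, qS S ≤ 1 := fun S => hq1 ▸ tsum_ind_le_tsum hq0 hqs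
  -- splitting into F and complement
  have hsplit : ∀ (g : X → ℝ), Summable g → (∑' v, g v) = (∑' v, F.indicator g v) + ∑' v, Fᶜ.indicator g v := by
    intro g hgs
    rw [← Summable.tsum_add (hgs.indicator F) (hgs.indicator Fᶜ)]
    refine tsum_congr fun v => ?_
    by_cases hv : v ∈ F
    · rw [Set.indicator_of_mem hv, Set.indicator_of_notMem (by simpa using hv)]
      ring
    · rw [Set.indicator_of_notMem hv, Set.indicator_of_mem (by simpa using hv)]
      ring
  have hsplit_p : pS F + pS Fᶜ = 1 := by rw [← hp1, hsplit p hps]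
  have hsplit_q : qS F + qS Fᶜ = 1 := by rw [← hq1, hsplit q hqs]
  -- the three bad sets
  set Sp : Set X := {v | Real.exp (6*ε) < r v} with hSp
  set S1 : Set X := {v | r v < Real.exp (-(6*ε)) ∧ 0 < q v} with hS1
  set S0 : Set X := {v | r v < Real.exp (-(6*ε)) ∧ ¬ 0 < q v} with hS0
  have hFc : Fᶜ ⊆ Sp ∪ (S1 ∪ S0) := by
    intro v hv
    rw [hF] at hv
    simp only [Set.mem_compl_iff, Set.mem_setOf_eq, not_and_or, not_le] at hv
    rcases hv with h | h
    · by_cases hq : 0 < q v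
      · exact Or.inr (Or.inl ⟨h, hq⟩)
      · exact Or.inr (Or.inr ⟨h, hq⟩)
    · exact Or.inl h
  -- bound on q(Sp)
  have hqSp : qS Sp ≤ K/3 := by
    have hqpos : ∀ v ∈ Sp, Real.exp (6*ε) * q v ≤ p v := by
      intro v hv
      have hq : q v ≠ 0 := by
        intro h
        have : r v = 0 := by rw [hr]; simp [h]
        have h2 : Real.exp (6*ε) < r v := hv
        rw [this] at h2
        exact absurd h2 (not_lt.mpr (Real.exp_pos _).le)
      have hqpos' : 0 < q v := (hq0 v).lt_of_ne (Ne.symm hq)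
      have : Real.exp (6*ε) < p v / q v := hv
      calc Real.exp (6*ε) * q v ≤ (p v / q v) * q v := by
            exact mul_le_mul_of_nonneg_right this.le (hq0 v)
        _ = p v := by field_simp
    have step : Real.exp (6*ε) * qS Sp ≤ pS Sp := by
      rw [hqS, hpS, ← tsum_mul_left]
      refine Summable.tsum_le_tsum (fun v => ?_) ((hqs.indicator Sp).mul_left _) (hps.indicator Sp)
      by_cases hv : v ∈ Sp
      · rw [Set.indicator_of_mem hv, Set.indicator_of_mem hv]
        exact hqpos v hv
      · rw [Set.indicator_of_notMem hv, Set.indicator_of_notMem hv, mul_zero]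
    have hup : pS Sp ≤ Real.exp (3*ε) * qS Sp + δhat := (hind Sp).2
    have hgap : Real.exp (3*ε) + 3*ε ≤ Real.exp (6*ε) := by
      have : Real.exp (6*ε) = Real.exp (3*ε) * Real.exp (3*ε) := by
        rw [← Real.exp_add]; ring_nf
      nlinarith [Real.exp_pos (3*ε)]
    have h3 : 3*ε * qS Sp ≤ δhat := by nlinarith [hqS0 Sp]
    rw [hKdef, div_div, le_div_iff₀ (by positivity)]
    linarith [h3]
  -- q(S0) = 0 and p(S0) ≤ δhat
  have hqS0z : qS S0 = 0 := by
    rw [hqS]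
    have : ∀ v, S0.indicator q v = 0 := by
      intro v
      by_cases hv : v ∈ S0
      · rw [Set.indicator_of_mem hv]
        exact le_antisymm (not_lt.mp hv.2) (hq0 v) |>.symm ▸ rfl
      · exact Set.indicator_of_notMem hv q
    simp only [this, tsum_zero]
  have hpS0d : pS S0 ≤ δhat := by
    have := (hind S0).2
    rw [show (∑' v, S0.indicator q v) = qS S0 from rfl] at this
    rw [hqS0z, mul_zero, zero_add] at this
    exact this
  -- pointwise bound on S1 : p ≤ e^{-6ε} q
  have hS1pw : ∀ v ∈ S1, p v ≤ Real.exp (-(6*ε)) * q v := by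
    intro v hv
    have hqpos : 0 < q v := hv.2
    have hlt : p v / q v < Real.exp (-(6*ε)) := hv.1
    calc p v = (p v / q v) * q v := by field_simp
      _ ≤ Real.exp (-(6*ε)) * q v := mul_le_mul_of_nonneg_right hlt.le (hq0 v)
  have hpS1le : pS S1 ≤ Real.exp (-(6*ε)) * qS S1 := by
    rw [hpS, hqS, ← tsum_mul_left]
    refine Summable.tsum_le_tsum (fun v => ?_) (hps.indicator S1) ((hqs.indicator S1).mul_left _)
    by_cases hv : v ∈ S1
    · rw [Set.indicator_of_mem hv, Set.indicator_of_mem hv]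
      exact hS1pw v hv
    · rw [Set.indicator_of_notMem hv, Set.indicator_of_notMem hv, mul_zero]
  have hqS1b : qS S1 ≤ (37/15) * K := by
    have hup : qS S1 ≤ Real.exp (3*ε) * pS S1 + δhat := (hind S1).1
    have hchain : qS S1 ≤ Real.exp (3*ε) * (Real.exp (-(6*ε)) * qS S1) + δhat := by
      have := mul_le_mul_of_nonneg_left hpS1le (Real.exp_pos (3*ε)).le
      linarith
    have hee : Real.exp (3*ε) * Real.exp (-(6*ε)) = Real.exp (-(3*ε)) := by
      rw [← Real.exp_add]; ring_nf
    rw [← mul_assoc, hee] at hchain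
    -- (1 - e^{-3ε}) qS S1 ≤ δhat, and 1 - e^{-3ε} ≥ 3ε/(37/5)
    have hlow : 3*ε/(37/5) ≤ 1 - Real.exp (-(3*ε)) := by
      have hs : (0:ℝ) < Real.exp (3*ε) := Real.exp_pos _
      have heq : 1 - Real.exp (-(3*ε)) = (Real.exp (3*ε) - 1)/Real.exp (3*ε) := by
        rw [Real.exp_neg]; field_simp
      rw [heq, div_le_div_iff₀ (by norm_num) hs]
      have key : 3*ε*Real.exp (3*ε) ≤ 3*ε*(37/5) :=
        mul_le_mul_of_nonneg_left hexp3 (by positivity)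
      linarith
    have h2 : (3*ε/(37/5)) * qS S1 ≤ δhat := by nlinarith [hqS0 S1]
    rw [hKdef, show (37:ℝ)/15 * (δhat / ε) = (37/15*δhat)/ε by ring, le_div_iff₀ hε]
    linarith [h2]
  have hpS1b : pS S1 ≤ (37/15) * K := by
    have : Real.exp (-(6*ε)) ≤ 1 := by rw [← Real.exp_zero]; exact Real.exp_le_exp.mpr (by linarith)
    nlinarith [hqS0 S1, hpS1le, hqS1b]
  -- complement bounds
  have hqFc : qS Fᶜ ≤ (14/5) * K := by
    have h1 : qS Fᶜ ≤ qS (Sp ∪ (S1 ∪ S0)) := tsum_ind_mono hq0 hqs hFc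
    have h2 : qS (Sp ∪ (S1 ∪ S0)) ≤ qS Sp + qS (S1 ∪ S0) := tsum_ind_union_le hq0 hqs
    have h3 : qS (S1 ∪ S0) ≤ qS S1 + qS S0 := tsum_ind_union_le hq0 hqs
    rw [hqS0z] at h3
    linarith [hqSp, hqS1b]
  have hpFc : pS Fᶜ ≤ (2/5) := by
    have h1 : pS Fᶜ ≤ pS (Sp ∪ (S1 ∪ S0)) := tsum_ind_mono hp0 hps hFc
    have h2 : pS (Sp ∪ (S1 ∪ S0)) ≤ pS Sp + pS (S1 ∪ S0) := tsum_ind_union_le hp0 hps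
    have h3 : pS (S1 ∪ S0) ≤ pS S1 + pS S0 := tsum_ind_union_le hp0 hps
    have h4 : pS Sp ≤ Real.exp (3*ε) * qS Sp + δhat := (hind Sp).2
    have h5 : Real.exp (3*ε) * qS Sp ≤ (37/5) * (K/3) := by
      nlinarith [hqS0 Sp, hqSp, Real.exp_pos (3*ε)]
    nlinarith [hpS1b, hpS0d]
  have hpSF : (3/5) ≤ pS F := by linarith [hsplit_p]
  have hA : pS F - qS F ≤ (14/5) * K := by
    have : qS F = 1 - qS Fᶜ := by linarith [hsplit_q]
    have hp' : pS F = 1 - pS Fᶜ := by linarith [hsplit_p]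
    have := hpS0 Fᶜ
    linarith
  -- the constant c = e^{6ε} - 1
  set c : ℝ := Real.exp (6*ε) - 1 with hc
  have hc0 : 0 ≤ c := by rw [hc]; linarith
  have hc121 : c ≤ 121*ε := by
    have h3 : Real.exp (6*ε) * Real.exp (-(6*ε)) = 1 := by
      rw [← Real.exp_add]; ring_nf; exact Real.exp_zero
    have h2 := Real.add_one_le_exp (-(6*ε))
    have h1 : Real.exp (6*ε) - 1 ≤ 6*ε*Real.exp (6*ε) := by
      nlinarith [Real.exp_pos (6*ε)]
    have h4 : 6*ε*Real.exp (6*ε) ≤ 6*ε*(201/10) :=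
      mul_le_mul_of_nonneg_left hexp6 (by positivity)
    rw [hc]; linarith
  -- pointwise numerator bound on F
  have hptwise : ∀ v, F.indicator (fun v => Real.logb 2 (r v) * p v) v
      ≤ F.indicator (fun v => (1/Real.log 2) * ((p v - q v) + c^2 * q v)) v := by
    intro v
    by_cases hv : v ∈ F
    · rw [Set.indicator_of_mem hv, Set.indicator_of_mem hv]
      have hqv := hqFpos v hv
      have hrpos : 0 < r v := lt_of_lt_of_le (Real.exp_pos _) hv.1
      have hlog : Real.log (r v) ≤ r v - 1 := Real.log_le_sub_one_of_pos hrpos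
      have hup : r v - 1 ≤ c := by rw [hc]; linarith [hv.2]
      have hdn : -c ≤ r v - 1 := by
        have h3 : Real.exp (6*ε) * Real.exp (-(6*ε)) = 1 := by
          rw [← Real.exp_add]; ring_nf; exact Real.exp_zero
        have h4 := hv.1
        rw [hc]
        nlinarith [Real.exp_pos (6*ε), sq_nonneg (Real.exp (6*ε) - 1)]
      have hrc : (r v - 1)^2 ≤ c^2 := sq_le_sq' hdn hup
      have hprq : (r v - 1) * p v = (p v - q v) + (r v - 1)^2 * q v := by
        rw [hpF v hv]; ring
      calc Real.logb 2 (r v) * p v = (Real.log (r v) / Real.log 2) * p v := by rw [Real.logb]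
        _ ≤ ((r v - 1) / Real.log 2) * p v := by
            exact mul_le_mul_of_nonneg_right
              ((div_le_div_iff_of_pos_right hl2pos).mpr hlog) (hp0 v)
        _ = (1/Real.log 2) * ((r v - 1) * p v) := by ring
        _ = (1/Real.log 2) * ((p v - q v) + (r v - 1)^2 * q v) := by rw [hprq]
        _ ≤ (1/Real.log 2) * ((p v - q v) + c^2 * q v) := by
            refine mul_le_mul_of_nonneg_left ?_ (by positivity)
            have := mul_le_mul_of_nonneg_right hrc (hq0 v)
            linarith
    · rw [Set.indicator_of_notMem hv, Set.indicator_of_notMem hv]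
  -- summability of the numerator
  have hNsum : Summable (F.indicator (fun v => Real.logb 2 (r v) * p v)) := by
    have habs : ∀ v, |F.indicator (fun v => Real.logb 2 (r v) * p v) v| ≤ (6*ε/Real.log 2) * p v := by
      intro v
      by_cases hv : v ∈ F
      · rw [Set.indicator_of_mem hv]
        have hrpos : 0 < r v := lt_of_lt_of_le (Real.exp_pos _) hv.1
        have hlogup : Real.log (r v) ≤ 6*ε := by
          rw [Real.log_le_iff_le_exp hrpos]; exact hv.2
        have hlogdn : -(6*ε) ≤ Real.log (r v) := by
          rw [Real.le_log_iff_exp_le hrpos]; exact hv.1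
        have h1 : |Real.logb 2 (r v)| ≤ 6*ε/Real.log 2 := by
          rw [Real.logb, abs_div, abs_of_pos hl2pos]
          exact (div_le_div_iff_of_pos_right hl2pos).mpr (abs_le.mpr ⟨hlogdn, hlogup⟩)
        rw [abs_mul, abs_of_nonneg (hp0 v)]
        exact mul_le_mul_of_nonneg_right h1 (hp0 v)
      · rw [Set.indicator_of_notMem hv]
        simp only [abs_zero]
        exact mul_nonneg (div_nonneg (by linarith) hl2pos.le) (hp0 v)
    have hsab : Summable (fun v => |F.indicator (fun v => Real.logb 2 (r v) * p v) v|) :=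
      Summable.of_nonneg_of_le (fun v => abs_nonneg _) habs (hps.mul_left _)
    exact hsab.of_abs
  -- summability and value of the comparison sum
  have hRsum0 : Summable (fun v => (1/Real.log 2) * ((p v - q v) + c^2 * q v)) :=
    ((hps.sub hqs).add (hqs.mul_left (c^2))).mul_left _
  have hRsum : Summable (F.indicator (fun v => (1/Real.log 2) * ((p v - q v) + c^2 * q v))) :=
    hRsum0.indicator F
  have hNum1 : (∑' v, F.indicator (fun v => Real.logb 2 (r v) * p v) v)
      ≤ ∑' v, F.indicator (fun v => (1/Real.log 2) * ((p v - q v) + c^2 * q v)) v :=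
    Summable.tsum_le_tsum hptwise hNsum hRsum
  have hRpt : ∀ v, F.indicator (fun v => (1/Real.log 2) * ((p v - q v) + c^2 * q v)) v
      = (1/Real.log 2) * F.indicator p v + ((c^2-1)/Real.log 2) * F.indicator q v := by
    intro v
    by_cases hv : v ∈ F
    · rw [Set.indicator_of_mem hv, Set.indicator_of_mem hv, Set.indicator_of_mem hv]; ring
    · rw [Set.indicator_of_notMem hv, Set.indicator_of_notMem hv, Set.indicator_of_notMem hv]
      ring
  have hRval : (∑' v, F.indicator (fun v => (1/Real.log 2) * ((p v - q v) + c^2 * q v)) v)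
      = (1/Real.log 2) * pS F + ((c^2-1)/Real.log 2) * qS F := by
    rw [tsum_congr hRpt,
      Summable.tsum_add ((hps.indicator F).mul_left _) ((hqs.indicator F).mul_left _),
      tsum_mul_left, tsum_mul_left]
  -- numeric assembly
  have hl2inv : 1/Real.log 2 ≤ 3/2 := by
    rw [div_le_iff₀ hl2pos]; linarith
  have hcsq : c^2 ≤ (121*ε)^2 := pow_le_pow_left₀ hc0 hc121 2
  have hNum2 : (1/Real.log 2) * pS F + ((c^2-1)/Real.log 2) * qS F
      ≤ (3/2) * ((14/5)*K) + (3/2) * (121*ε)^2 := by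
    have heq : (1/Real.log 2) * pS F + ((c^2-1)/Real.log 2) * qS F
        = (1/Real.log 2) * (pS F - qS F) + (c^2/Real.log 2) * qS F := by ring
    rw [heq]
    have t1 : (c^2/Real.log 2) * qS F ≤ c^2/Real.log 2 :=
      mul_le_of_le_one_right (by positivity) (hqS1 F)
    have t2 : (1/Real.log 2) * (pS F - qS F) ≤ (1/Real.log 2) * ((14/5)*K) :=
      mul_le_mul_of_nonneg_left hA (by positivity)
    have t3 : (1/Real.log 2) * ((14/5)*K) ≤ (3/2) * ((14/5)*K) :=
      mul_le_mul_of_nonneg_right hl2inv (by positivity)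
    have t4 : c^2/Real.log 2 ≤ (3/2) * (121*ε)^2 := by
      rw [div_eq_mul_one_div]
      calc c^2 * (1/Real.log 2) ≤ c^2 * (3/2) := mul_le_mul_of_nonneg_left hl2inv (by positivity)
        _ ≤ (121*ε)^2 * (3/2) := mul_le_mul_of_nonneg_right hcsq (by norm_num)
        _ = (3/2) * (121*ε)^2 := by ring
    linarith
  -- final division step
  have hden_pos : (0:ℝ) < pS F := lt_of_lt_of_le (by norm_num) hpSF
  rw [div_le_iff₀ hden_pos]
  have hfin : (∑' v, F.indicator (fun v => Real.logb 2 (r v) * p v) v)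
      ≤ (3/2) * ((14/5)*K) + (3/2) * (121*ε)^2 := by
    rw [← hRval] at hNum2
    linarith
  have hRHS : 50000 * (ε^2 + K) * (3/5) ≤ 50000 * (ε^2 + K) * pS F :=
    mul_le_mul_of_nonneg_left hpSF (by positivity)
  nlinarith [hK0, sq_nonneg ε]



lemma probaux_le_one {α : Type*} (μ : PMF α) (S : Set α) : μ.toOuterMeasure S ≤ 1 := by
  conv_rhs => rw [← μ.tsum_coe]
  rw [PMF.toOuterMeasure_apply]
  exact Summable.tsum_le_tsum (fun x => Set.indicator_le_self _ _ x) ENNReal.summable ENNReal.summable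

lemma probaux_ne_top {α : Type*} (μ : PMF α) (S : Set α) : μ.toOuterMeasure S ≠ ⊤ :=
  ne_top_of_le_ne_top ENNReal.one_ne_top (probaux_le_one μ S)

lemma prob_nonneg {α : Type*} (μ : PMF α) (S : Set α) : 0 ≤ prob μ S :=
  ENNReal.toReal_nonneg

lemma prob_le_one {α : Type*} (μ : PMF α) (S : Set α) : prob μ S ≤ 1 := by
  simpa [prob] using ENNReal.toReal_mono ENNReal.one_ne_top (probaux_le_one μ S)

lemma prob_mono {α : Type*} (μ : PMF α) {S T : Set α} (h : S ⊆ T) : prob μ S ≤ prob μ T :=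
  ENNReal.toReal_mono (probaux_ne_top μ T) (μ.toOuterMeasure.mono h)

lemma toOuterMeasure_decomp {Z X : Type*} (μ : PMF Z) (g : Z → X) (B : Set Z) (S : Set X) :
    μ.toOuterMeasure {z | z ∈ B ∧ g z ∈ S}
      = ∑' v : X, S.indicator (fun v => μ.toOuterMeasure {z | z ∈ B ∧ g z = v}) v := by
  have key : ∀ v : X, S.indicator (fun v => μ.toOuterMeasure {z | z ∈ B ∧ g z = v}) v
      = μ.toOuterMeasure {z | (z ∈ B ∧ g z = v) ∧ v ∈ S} := by
    intro v
    by_cases hv : v ∈ S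
    · rw [Set.indicator_of_mem hv]
      congr 1
      ext z
      simp [hv]
    · rw [Set.indicator_of_notMem hv]
      have : {z | (z ∈ B ∧ g z = v) ∧ v ∈ S} = (∅ : Set Z) := by
        ext z; simp [hv]
      rw [this]
      simp [PMF.toOuterMeasure_apply]
  simp_rw [key, PMF.toOuterMeasure_apply]
  rw [ENNReal.tsum_comm]
  refine tsum_congr fun z => ?_
  by_cases hz : z ∈ B ∧ g z ∈ S
  · rw [Set.indicator_of_mem (show z ∈ {z | z ∈ B ∧ g z ∈ S} from hz)]
    rw [tsum_eq_single (g z)]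
    · exact (Set.indicator_of_mem (show z ∈ {z' | (z' ∈ B ∧ g z' = g z) ∧ g z ∈ S} from ⟨⟨hz.1, rfl⟩, hz.2⟩) _).symm
    · intro v hv
      exact Set.indicator_of_notMem (show z ∉ {z' | (z' ∈ B ∧ g z' = v) ∧ v ∈ S} from fun h => hv h.1.2.symm) _
  · rw [Set.indicator_of_notMem (show z ∉ {z | z ∈ B ∧ g z ∈ S} from hz)]
    symm
    rw [ENNReal.tsum_eq_zero]
    intro v
    exact Set.indicator_of_notMem (show z ∉ {z' | (z' ∈ B ∧ g z' = v) ∧ v ∈ S} from fun h => hz ⟨h.1.1, h.1.2 ▸ h.2⟩) _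

lemma prob_decomp {Z X : Type*} (μ : PMF Z) (g : Z → X) (B : Set Z) (S : Set X) :
    prob μ {z | z ∈ B ∧ g z ∈ S}
      = ∑' v : X, S.indicator (fun v => prob μ {z | z ∈ B ∧ g z = v}) v := by
  rw [prob, toOuterMeasure_decomp μ g B S]
  rw [ENNReal.tsum_toReal_eq]
  · refine tsum_congr fun v => ?_
    by_cases hv : v ∈ S
    · simp [Set.indicator_of_mem hv, prob]
    · simp [Set.indicator_of_notMem hv]
  · intro v
    by_cases hv : v ∈ S
    · simp only [Set.indicator_of_mem hv]; exact probaux_ne_top μ _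
    · simp [Set.indicator_of_notMem hv]

lemma summable_prob_fiber {Z X : Type*} (μ : PMF Z) (g : Z → X) (B : Set Z) :
    Summable (fun v : X => prob μ {z | z ∈ B ∧ g z = v}) := by
  have h : ∑' v : X, μ.toOuterMeasure {z | z ∈ B ∧ g z = v} ≠ ⊤ := by
    have h2 := toOuterMeasure_decomp μ g B (Set.univ : Set X)
    simp only [Set.indicator_univ] at h2
    rw [← h2]
    exact probaux_ne_top μ _
  exact ENNReal.summable_toReal h


/-- **Lemma 3.7.**  There is an absolute constant `C > 0` such that: if `A` is
`(ε,δ)`-differentially private, `X ∼ P^n`, `ε ∈ (0,1/2]` and `δ̂ ∈ (0, ε/15]`, then for every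
pair `(a, w₁^{i-1}) ∈ E_i(δ̂)`, the conditional expectation
`E[Z_i(A(X), X₁^i) | A(X) = a, X₁^{i-1} = w₁^{i-1}, (A(X), X₁^i) ∈ F_i] ≤ C·(ε² + δ̂/ε)`. -/
theorem stmt_10 : ∃ C : ℝ, 0 < C ∧
    ∀ (X Y : Type) [Countable X] (n : ℕ) (A : (Fin n → X) → PMF Y) (ε δ δhat : ℝ),
      DiffPrivate A ε δ → 0 < ε → ε ≤ 1 / 2 → 0 < δhat → δhat ≤ ε / 15 →
      ∀ (P : PMF X) (i : Fin n) (a : Y) (w : Fin n → X),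
        (a, w) ∈ Eset (jointPMF (iidPMF P n) A) P i ε δhat →
        (∑' v : X,
            Set.indicator
              {v : X | (a, Function.update w i v) ∈ Fset (jointPMF (iidPMF P n) A) P i ε}
              (fun v =>
                Zi (jointPMF (iidPMF P n) A) P i (a, Function.update w i v) *
                  prob (jointPMF (iidPMF P n) A)
                    {p | p.2 = a ∧ PrefixEq i w p.1 ∧ p.1 i = v})
              v) /
          prob (jointPMF (iidPMF P n) A)
            {p | p.2 = a ∧ PrefixEq i w p.1 ∧
                 (p.2, p.1) ∈ Fset (jointPMF (iidPMF P n) A) P i ε}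
        ≤ C * (ε ^ 2 + δhat / ε) := by
  refine ⟨50000, by norm_num, ?_⟩
  intro X Y _ n A ε δ δhat _hDP hε hε2 hδ hδε P i a w hE
  set μ : PMF ((Fin n → X) × Y) := jointPMF (iidPMF P n) A with hμ
  set B : Set ((Fin n → X) × Y) := {p | p.2 = a ∧ PrefixEq i w p.1} with hB
  set m : X → ℝ := fun v => prob μ {p | p.2 = a ∧ PrefixEq i w p.1 ∧ p.1 i = v} with hm
  set D : ℝ := prob μ B with hD
  set q : X → ℝ := fun v => (P v).toReal with hq
  -- prefix invariance of condXi
  have hpre : ∀ x : Fin n → X, (∀ j : Fin n, (j:ℕ) < (i:ℕ) → x j = w j) →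
      ∀ O : Set X, condXi μ i a x O = condXi μ i a w O := by
    intro x hx O
    have hPE : ∀ y : Fin n → X, PrefixEq i x y ↔ PrefixEq i w y := by
      intro y
      constructor <;> intro h j hj
      · rw [h j hj, hx j hj]
      · rw [h j hj, ← hx j hj]
    have e1 : {p : (Fin n → X) × Y | p.2 = a ∧ PrefixEq i x p.1 ∧ p.1 i ∈ O}
        = {p | p.2 = a ∧ PrefixEq i w p.1 ∧ p.1 i ∈ O} := by
      ext z
      exact and_congr_right fun _ => and_congr_left fun _ => hPE z.1
    have e2 : {p : (Fin n → X) × Y | p.2 = a ∧ PrefixEq i x p.1}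
        = {p | p.2 = a ∧ PrefixEq i w p.1} := by
      ext z
      exact and_congr_right fun _ => hPE z.1
    rw [condXi, condXi, e1, e2]
  have hupd : ∀ v : X, ∀ j : Fin n, (j:ℕ) < (i:ℕ) → Function.update w i v j = w j := by
    intro v j hj
    exact Function.update_of_ne (fun h => absurd hj (by rw [h]; exact lt_irrefl _)) _ _
  have hfiber : ∀ v : X, prob μ {z | z ∈ B ∧ (fun z : (Fin n → X) × Y => z.1 i) z = v} = m v := by
    intro v
    rw [hm]
    congr 1
    ext z
    simp only [hB, Set.mem_setOf_eq, and_assoc]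
  have hm_summ : Summable m :=
    (summable_prob_fiber μ (fun z => z.1 i) B).congr hfiber
  have hm0 : ∀ v, 0 ≤ m v := fun v => prob_nonneg μ _
  have hmD : ∀ v, m v ≤ D := by
    intro v
    rw [hm, hD]
    exact prob_mono μ (fun z hz => ⟨hz.1, hz.2.1⟩)
  have hDsum : ∑' v, m v = D := by
    have h1 := prob_decomp μ (fun z => z.1 i) B Set.univ
    simp only [Set.indicator_univ] at h1
    have h2 : {z : (Fin n → X) × Y | z ∈ B ∧ (fun z : (Fin n → X) × Y => z.1 i) z ∈ (Set.univ : Set X)} = B := by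
      ext z; simp
    rw [h2] at h1
    rw [← tsum_congr hfiber, ← h1, hD]
  rcases eq_or_lt_of_le (prob_nonneg μ B) with hD0 | hDpos
  · -- degenerate case D = 0
    have hDz : D = 0 := by rw [hD, ← hD0]
    have hmz : ∀ v, m v = 0 := fun v => le_antisymm (hDz ▸ hmD v) (hm0 v)
    have hnum : (∑' v : X,
        Set.indicator {v : X | (a, Function.update w i v) ∈ Fset μ P i ε}
          (fun v => Zi μ P i (a, Function.update w i v) *
            prob μ {p | p.2 = a ∧ PrefixEq i w p.1 ∧ p.1 i = v}) v) = 0 := by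
      rw [show (0:ℝ) = ∑' _ : X, (0:ℝ) by rw [tsum_zero]]
      refine tsum_congr fun v => ?_
      have : prob μ {p | p.2 = a ∧ PrefixEq i w p.1 ∧ p.1 i = v} = 0 := hmz v
      by_cases hv : v ∈ {v : X | (a, Function.update w i v) ∈ Fset μ P i ε}
      · rw [Set.indicator_of_mem hv, this, mul_zero]
      · rw [Set.indicator_of_notMem hv]
    rw [hnum, zero_div]
    positivity
  · -- main case : D > 0
    set p : X → ℝ := fun v => m v / D with hp
    have hDne : D ≠ 0 := ne_of_gt hDpos
    have hp0 : ∀ v, 0 ≤ p v := fun v => div_nonneg (hm0 v) hDpos.le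
    have hps : Summable p := hm_summ.div_const D
    have hmp : ∀ v, m v = D * p v := by
      intro v
      rw [hp]
      field_simp
    have hp1 : ∑' v, p v = 1 := by
      rw [hp]
      rw [show (∑' v, m v / D) = (∑' v, m v)/D from tsum_div_const, hDsum, div_self hDne]
    -- facts about q
    have hq0 : ∀ v, 0 ≤ q v := fun v => ENNReal.toReal_nonneg
    have hqs : Summable q :=
      ENNReal.summable_toReal (by rw [P.tsum_coe]; exact ENNReal.one_ne_top)
    have hq1 : ∑' v, q v = 1 := by
      rw [hq, ← ENNReal.tsum_toReal_eq (fun v => PMF.apply_ne_top P v), P.tsum_coe, ENNReal.toReal_one]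
    have hprobP : ∀ O : Set X, prob P O = ∑' v, O.indicator q v := by
      intro O
      rw [prob, PMF.toOuterMeasure_apply,
        ENNReal.tsum_toReal_eq (fun v => ?_)]
      · refine tsum_congr fun v => ?_
        by_cases hv : v ∈ O
        · rw [Set.indicator_of_mem hv, Set.indicator_of_mem hv]
        · rw [Set.indicator_of_notMem hv, Set.indicator_of_notMem hv, ENNReal.toReal_zero]
      · by_cases hv : v ∈ O
        · rw [Set.indicator_of_mem hv]; exact PMF.apply_ne_top P v
        · rw [Set.indicator_of_notMem hv]; exact ENNReal.zero_ne_top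
    -- condXi as a sum
    have hcondX : ∀ O : Set X, condXi μ i a w O = ∑' v, O.indicator p v := by
      intro O
      rw [condXi]
      have e1 : {z : (Fin n → X) × Y | z.2 = a ∧ PrefixEq i w z.1 ∧ z.1 i ∈ O}
          = {z | z ∈ B ∧ (fun z : (Fin n → X) × Y => z.1 i) z ∈ O} := by
        ext z
        simp only [hB, Set.mem_setOf_eq, and_assoc]
      have e2 : {p : (Fin n → X) × Y | p.2 = a ∧ PrefixEq i w p.1} = B := hB.symm
      rw [e1, e2, ← hD, prob_decomp μ (fun z => z.1 i) B O]
      rw [show (∑' v, O.indicator (fun v => prob μ {z | z ∈ B ∧ (fun z : (Fin n → X) × Y => z.1 i) z = v}) v)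
          = ∑' v, O.indicator m v from tsum_congr fun v => by
            by_cases hv : v ∈ O
            · rw [Set.indicator_of_mem hv, Set.indicator_of_mem hv, hfiber v]
            · rw [Set.indicator_of_notMem hv, Set.indicator_of_notMem hv]]
      rw [show (∑' v, O.indicator m v)/D = ∑' v, O.indicator m v / D from (tsum_div_const).symm]
      refine tsum_congr fun v => ?_
      by_cases hv : v ∈ O
      · rw [Set.indicator_of_mem hv, Set.indicator_of_mem hv]
      · rw [Set.indicator_of_notMem hv, Set.indicator_of_notMem hv, zero_div]
    have hcond_single : ∀ v : X, condXi μ i a w {v} = p v := by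
      intro v
      rw [hcondX {v}]
      rw [tsum_eq_single v]
      · rw [Set.indicator_of_mem (show v ∈ ({v}:Set X) from rfl)]
      · intro u hu
        exact Set.indicator_of_notMem (show u ∉ ({v}:Set X) from fun h => hu h) p
    -- indistinguishability hypothesis in sum form
    have hind : ∀ S : Set X,
        (∑' v, S.indicator q v) ≤ Real.exp (3*ε) * (∑' v, S.indicator p v) + δhat ∧
        (∑' v, S.indicator p v) ≤ Real.exp (3*ε) * (∑' v, S.indicator q v) + δhat := by
      intro S
      constructor
      · calc (∑' v, S.indicator q v) = prob P S := (hprobP S).symm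
          _ ≤ Real.exp (3*ε) * condXi μ i a w S + δhat := (hE S).1
          _ = Real.exp (3*ε) * (∑' v, S.indicator p v) + δhat := by rw [hcondX S]
      · calc (∑' v, S.indicator p v) = condXi μ i a w S := (hcondX S).symm
          _ ≤ Real.exp (3*ε) * prob P S + δhat := (hE S).2
          _ = Real.exp (3*ε) * (∑' v, S.indicator q v) + δhat := by rw [hprobP S]
    -- the ratio at an updated dataset
    have hratio : ∀ v : X, condXi μ i (a, Function.update w i v).1 (a, Function.update w i v).2
          {(a, Function.update w i v).2 i} / (P ((a, Function.update w i v).2 i)).toReal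
        = p v / q v := by
      intro v
      show condXi μ i a (Function.update w i v) {Function.update w i v i}
          / (P (Function.update w i v i)).toReal = p v / q v
      rw [Function.update_self, hpre (Function.update w i v) (hupd v), hcond_single v]
    set Fs : Set X := {v | Real.exp (-(6*ε)) ≤ p v / q v ∧ p v / q v ≤ Real.exp (6*ε)} with hFs
    have hFiff : ∀ v : X, ((a, Function.update w i v) ∈ Fset μ P i ε) ↔ v ∈ Fs := by
      intro v
      constructor
      · intro h
        have h' : Real.exp (-(6*ε)) ≤ condXi μ i (a, Function.update w i v).1
              (a, Function.update w i v).2 {(a, Function.update w i v).2 i}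
              / (P ((a, Function.update w i v).2 i)).toReal
            ∧ condXi μ i (a, Function.update w i v).1 (a, Function.update w i v).2
              {(a, Function.update w i v).2 i} / (P ((a, Function.update w i v).2 i)).toReal
              ≤ Real.exp (6*ε) := h
        rw [hratio v] at h'
        exact h'
      · intro h
        have h' : Real.exp (-(6*ε)) ≤ p v / q v ∧ p v / q v ≤ Real.exp (6*ε) := h
        rw [← hratio v] at h'
        exact h'
    have hsetF : {v : X | (a, Function.update w i v) ∈ Fset μ P i ε} = Fs :=
      Set.ext hFiff
    have hZeq : ∀ v : X, Zi μ P i (a, Function.update w i v) = Real.logb 2 (p v / q v) := by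
      intro v
      show Real.logb 2 (condXi μ i (a, Function.update w i v).1 (a, Function.update w i v).2
        {(a, Function.update w i v).2 i} / (P ((a, Function.update w i v).2 i)).toReal) = _
      rw [hratio v]
    -- numerator
    have hnum_eq : (∑' v, Fs.indicator (fun v => Zi μ P i (a, Function.update w i v)
          * prob μ {z | z.2 = a ∧ PrefixEq i w z.1 ∧ z.1 i = v}) v)
        = D * ∑' v, Fs.indicator (fun v => Real.logb 2 (p v / q v) * p v) v := by
      rw [← tsum_mul_left]
      refine tsum_congr fun v => ?_
      by_cases hv : v ∈ Fs
      · rw [Set.indicator_of_mem hv, Set.indicator_of_mem hv, hZeq v]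
        rw [show prob μ {z : (Fin n → X) × Y | z.2 = a ∧ PrefixEq i w z.1 ∧ z.1 i = v} = m v from rfl]
        rw [hmp v]
        ring
      · rw [Set.indicator_of_notMem hv, Set.indicator_of_notMem hv, mul_zero]
    -- denominator
    have hden_eq : prob μ {z | z.2 = a ∧ PrefixEq i w z.1 ∧ (z.2, z.1) ∈ Fset μ P i ε}
        = D * ∑' v, Fs.indicator p v := by
      have e1 : {z : (Fin n → X) × Y | z.2 = a ∧ PrefixEq i w z.1 ∧ (z.2, z.1) ∈ Fset μ P i ε}
          = {z | z ∈ B ∧ (fun z : (Fin n → X) × Y => z.1 i) z ∈ Fs} := by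
        ext z
        simp only [hB, Set.mem_setOf_eq, and_assoc]
        refine and_congr_right fun h1 => and_congr_right fun h2 => ?_
        have hr2 : condXi μ i z.2 z.1 {z.1 i} / (P (z.1 i)).toReal = p (z.1 i) / q (z.1 i) := by
          rw [h1, hpre z.1 h2, hcond_single (z.1 i)]
        constructor
        · intro h3
          have h3' : Real.exp (-(6*ε)) ≤ condXi μ i z.2 z.1 {z.1 i} / (P (z.1 i)).toReal
              ∧ condXi μ i z.2 z.1 {z.1 i} / (P (z.1 i)).toReal ≤ Real.exp (6*ε) := h3
          rw [hr2] at h3'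
          exact h3'
        · intro h3
          have h3' : Real.exp (-(6*ε)) ≤ p (z.1 i) / q (z.1 i)
              ∧ p (z.1 i) / q (z.1 i) ≤ Real.exp (6*ε) := h3
          rw [← hr2] at h3'
          exact h3'
      rw [e1, prob_decomp μ (fun z => z.1 i) B Fs, ← tsum_mul_left]
      refine tsum_congr fun v => ?_
      by_cases hv : v ∈ Fs
      · rw [Set.indicator_of_mem hv, Set.indicator_of_mem hv, hfiber v, hmp v]
      · rw [Set.indicator_of_notMem hv, Set.indicator_of_notMem hv, mul_zero]
    rw [hsetF, hnum_eq, hden_eq, mul_div_mul_left _ _ hDne]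
    exact core_lemma p q ε δhat hε hε2 hδ hδε hp0 hq0 hps hqs hp1 hq1 hind
end

section
/- There is an absolute constant c > 0 such that the following holds. For every ε ∈ (0, 1/2], δ ∈ (0, 1/4], and n > 64e, there exists an (ε,δ)-differentially private mechanism C : {0,1}^n → ({0,1}^n ∪ {⊥}) and a (non-product) distribution S over {0,1}^n such that, with X ~ S, I_∞^{β₂}(X; C(X)) ≥ n − 1 − r − log₂(1/β₁) for all β₁ ∈ (0, 1/2 − δ) and β₂ ∈ (0, 1/2 − δ − β₁), where r ≤ c·(log₂(1/δ)·log₂(n))/ε. In particular, (ε,δ)-differential privacy alone implies no nontrivial max-information bound over arbitrary (non-product) input distributions. -/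
open scoped ENNReal

/-!
Fix a binary code `T` of minimum distance greater than `2m + 1`, where `m ≈ log(1/δ)/ε`; a
maximal such code covers the cube by Hamming balls of radius `2m + 1`, so
`|T| ≥ 2ⁿ / (n + 1)^(2m+1) ≥ 2^(n - r)`. The mechanism decodes `x` to its nearest codeword,
at distance `D`, and releases that codeword with probability `e^(-εD) / 2` if `D ≤ m`, and `⊥`
otherwise. Neighbouring inputs either decode to the same codeword, with release probabilities
within a factor `e^ε`, or both release with probability at most `e^(-εm) / 2 ≤ δ`; this gives
`(ε, δ)`-privacy. For `X` uniform on `T` the event `C(X) = X` has probability `1/2`, while for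
an independent copy of `X` it has probability `1 / (2|T|)`, which forces the max-information
to be about `log₂ |T| ≥ n - r`.
-/

open Finset

namespace MaxInfoLowerBound

section Hamming

variable {ι β : Type*} [Fintype ι] [DecidableEq β]

lemma hammingDist_update_add_one {y t : ι → β} [DecidableEq ι] {i : ι} (h : y i ≠ t i) :
    hammingDist (Function.update y i (t i)) t + 1 = hammingDist y t := by
  have hfilter : ({j | Function.update y i (t i) j ≠ t j} : Finset ι) =
      ({j | y j ≠ t j} : Finset ι).erase i := by
    ext j
    by_cases hj : j = i <;> simp [Function.update_apply, hj]
  rw [hammingDist, hammingDist, hfilter, card_erase_add_one (by simpa using h)]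

variable [DecidableEq ι] [Fintype β]

def hammingBall (t : ι → β) (R : ℕ) : Finset (ι → β) := {y | hammingDist y t ≤ R}

lemma exists_separated_covering_code (R : ℕ) :
    ∃ T : Finset (ι → β), (T : Set (ι → β)).Pairwise (fun x y => R < hammingDist x y) ∧
      ∀ x, ∃ t ∈ T, hammingDist x t ≤ R := by
  obtain ⟨T, hT, hmax⟩ := exists_max_image
    (univ.filter fun T : Finset (ι → β) => (T : Set (ι → β)).Pairwise
      fun x y => R < hammingDist x y) card ⟨∅, by simp⟩
  rw [mem_filter] at hT
  refine ⟨T, hT.2, fun x => ?_⟩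
  by_contra! hfar
  have hx : x ∉ T := fun hx => by simpa using hfar x hx
  have hins : ((insert x T : Finset _) : Set (ι → β)).Pairwise
      (fun x y => R < hammingDist x y) := by
    rw [coe_insert, Set.pairwise_insert]
    exact ⟨hT.2, fun t ht _ => ⟨hfar t ht, hammingDist_comm x t ▸ hfar t ht⟩⟩
  have := hmax _ (mem_filter.2 ⟨mem_univ _, hins⟩)
  rw [card_insert_of_notMem hx] at this
  omega

end Hamming

section Binary

variable {n : ℕ}

lemma eq_add_one_of_ne_zmod_two {a b : ZMod 2} (h : a ≠ b) : a = b + 1 := by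
  revert a b
  decide

lemma card_hammingBall_le (t : Fin n → ZMod 2) (R : ℕ) : #(hammingBall t R) ≤ (n + 1) ^ R := by
  induction R with
  | zero =>
    calc #(hammingBall t 0) ≤ #{t} := card_le_card fun y hy => by
          simpa [hammingBall, hammingDist_eq_zero] using hy
      _ = _ := by simp
  | succ R ih =>
    -- A point at distance `R + 1` from `t` is one bit flip away from a point at distance `R`.
    have hsub : hammingBall t (R + 1) ⊆
        (hammingBall t R ×ˢ (univ : Finset (Option (Fin n)))).image
          fun p => p.2.elim p.1 fun i => Function.update p.1 i (t i + 1) := by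
      intro y hy
      simp only [hammingBall, mem_filter, mem_univ, true_and] at hy
      rw [mem_image]
      by_cases hyR : hammingDist y t ≤ R
      · exact ⟨(y, none), by simp [hammingBall, hyR], rfl⟩
      obtain ⟨i, hi⟩ : ∃ i, y i ≠ t i := by
        by_contra! h
        simp [funext h] at hyR
      have hdist := hammingDist_update_add_one hi
      refine ⟨(Function.update y i (t i), some i),
        mem_product.2 ⟨mem_filter.2 ⟨mem_univ _, by dsimp only; omega⟩, mem_univ _⟩, ?_⟩
      simp [← eq_add_one_of_ne_zmod_two hi]
    calc #(hammingBall t (R + 1)) ≤ #(hammingBall t R) * (n + 1) := by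
          simpa using (card_le_card hsub).trans card_image_le
      _ ≤ (n + 1) ^ R * (n + 1) := Nat.mul_le_mul_right _ ih
      _ = (n + 1) ^ (R + 1) := (pow_succ _ _).symm

lemma two_pow_le_card_mul_of_covering {T : Finset (Fin n → ZMod 2)} {R : ℕ}
    (hcover : ∀ x, ∃ t ∈ T, hammingDist x t ≤ R) : 2 ^ n ≤ #T * (n + 1) ^ R :=
  calc 2 ^ n = #(univ : Finset (Fin n → ZMod 2)) := by simp
    _ ≤ #(T.biUnion fun t => hammingBall t R) := card_le_card fun x _ => by
        obtain ⟨t, ht, hxt⟩ := hcover x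
        exact mem_biUnion.2 ⟨t, ht, by simpa [hammingBall] using hxt⟩
    _ ≤ ∑ t ∈ T, #(hammingBall t R) := card_biUnion_le
    _ ≤ ∑ _t ∈ T, (n + 1) ^ R := sum_le_sum fun t _ => card_hammingBall_le t R
    _ = #T * (n + 1) ^ R := by rw [sum_const, smul_eq_mul]

lemma exists_separated_code_two_pow_le_card_mul (n R : ℕ) :
    ∃ T : Finset (Fin n → ZMod 2), T.Nonempty ∧
      (T : Set (Fin n → ZMod 2)).Pairwise (fun x y => R < hammingDist x y) ∧
      2 ^ n ≤ #T * (n + 1) ^ R := by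
  obtain ⟨T, hsep, hcover⟩ := exists_separated_covering_code (ι := Fin n) (β := ZMod 2) R
  have hcard := two_pow_le_card_mul_of_covering hcover
  refine ⟨T, card_pos.1 (Nat.pos_of_ne_zero fun h0 => ?_), hsep, hcard⟩
  simp [h0] at hcard

end Binary

section NearestCodeword

variable {ι β : Type*} [Fintype ι] [DecidableEq β] (T : Finset (ι → β)) (hT : T.Nonempty)

noncomputable def nearestCodeword (x : ι → β) : ι → β :=
  (T.exists_min_image (hammingDist x) hT).choose

lemma nearestCodeword_mem (x : ι → β) : nearestCodeword T hT x ∈ T :=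
  (T.exists_min_image (hammingDist x) hT).choose_spec.1

lemma hammingDist_nearestCodeword_le (x : ι → β) {t : ι → β} (ht : t ∈ T) :
    hammingDist x (nearestCodeword T hT x) ≤ hammingDist x t :=
  (T.exists_min_image (hammingDist x) hT).choose_spec.2 t ht

lemma nearestCodeword_of_mem {x : ι → β} (hx : x ∈ T) : nearestCodeword T hT x = x :=
  (hammingDist_eq_zero.1 (by simpa using hammingDist_nearestCodeword_le T hT x hx)).symm

lemma hammingDist_nearestCodeword_le_add (x x' : ι → β) :
    hammingDist x (nearestCodeword T hT x) ≤
      hammingDist x x' + hammingDist x' (nearestCodeword T hT x') :=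
  (hammingDist_nearestCodeword_le T hT x (nearestCodeword_mem T hT x')).trans
    (hammingDist_triangle _ _ _)

lemma nearestCodeword_eq_of_add_le {R : ℕ}
    (hsep : (T : Set (ι → β)).Pairwise fun x y => R < hammingDist x y) {x x' : ι → β}
    (h : hammingDist x (nearestCodeword T hT x) + hammingDist x x' +
      hammingDist x' (nearestCodeword T hT x') ≤ R) :
    nearestCodeword T hT x = nearestCodeword T hT x' := by
  by_contra hne
  have hfar := hsep (nearestCodeword_mem T hT x) (nearestCodeword_mem T hT x') hne
  have h₁ := hammingDist_triangle (nearestCodeword T hT x) x (nearestCodeword T hT x')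
  have h₂ := hammingDist_triangle x x' (nearestCodeword T hT x')
  have h₃ := hammingDist_comm (nearestCodeword T hT x) x
  omega

end NearestCodeword

lemma hammingDist_le_one_of_neighbor {X : Type*} [DecidableEq X] {n : ℕ} {x x' : Fin n → X}
    (h : Neighbor x x') : hammingDist x x' ≤ 1 := by
  obtain ⟨i, hi⟩ := h
  calc hammingDist x x' ≤ #{i} := card_le_card fun j hj => by
        by_contra hji
        exact (mem_filter.1 hj).2 (hi j (by simpa using hji))
    _ = 1 := card_singleton i

section ReleaseProb

noncomputable def releaseProb (ε : ℝ) (m D : ℕ) : ℝ :=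
  if D ≤ m then Real.exp (-(ε * D)) / 2 else 0

variable {ε δ : ℝ} {m D D' : ℕ}

lemma releaseProb_nonneg : 0 ≤ releaseProb ε m D := by
  unfold releaseProb
  split_ifs <;> positivity

lemma releaseProb_le_half (hε : 0 ≤ ε) : releaseProb ε m D ≤ 1 / 2 := by
  unfold releaseProb
  split_ifs
  · have : Real.exp (-(ε * D)) ≤ 1 := Real.exp_le_one_iff.2 (neg_nonpos.2 (by positivity))
    linarith
  · norm_num

@[simp]
lemma releaseProb_zero : releaseProb ε m 0 = 1 / 2 := by
  simp [releaseProb]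

lemma releaseProb_le_of_le (hε : 0 ≤ ε) (hD : m ≤ D) :
    releaseProb ε m D ≤ Real.exp (-(ε * m)) / 2 := by
  unfold releaseProb
  split_ifs
  · gcongr
  · positivity

lemma lt_of_lt_releaseProb (hε : 0 ≤ ε) (hm : Real.exp (-(ε * m)) / 2 ≤ δ)
    (h : δ < releaseProb ε m D) : D < m := by
  by_contra! hD
  linarith [releaseProb_le_of_le hε hD]

lemma releaseProb_le_exp_mul_add (hε : 0 ≤ ε) (hm : Real.exp (-(ε * m)) / 2 ≤ δ)
    (h : D' ≤ D + 1) : releaseProb ε m D ≤ Real.exp ε * releaseProb ε m D' + δ := by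
  have hδ : 0 ≤ δ := le_trans (by positivity) hm
  rcases le_or_gt m D with hD | hD
  · nlinarith [releaseProb_le_of_le hε hD, releaseProb_nonneg (ε := ε) (m := m) (D := D'),
      Real.exp_pos ε]
  have hD' : D' ≤ m := by omega
  have hcast : (D' : ℝ) ≤ D + 1 := by exact_mod_cast h
  have : Real.exp (-(ε * D)) ≤ Real.exp ε * Real.exp (-(ε * D')) := by
    rw [← Real.exp_add]
    gcongr
    nlinarith
  simp only [releaseProb, if_pos hD.le, if_pos hD']
  linarith

lemma one_sub_releaseProb_le_exp_mul_add (hε : 0 ≤ ε) (hm : Real.exp (-(ε * m)) / 2 ≤ δ)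
    (h : D ≤ D' + 1) :
    1 - releaseProb ε m D ≤ Real.exp ε * (1 - releaseProb ε m D') + δ := by
  have hq' := releaseProb_le_half (m := m) (D := D') hε
  have hq := releaseProb_nonneg (ε := ε) (m := m) (D := D)
  have he : 1 ≤ Real.exp ε := Real.one_le_exp_iff.2 hε
  rcases le_or_gt (releaseProb ε m D') δ with hδ | hδ
  · nlinarith
  have hD' := lt_of_lt_releaseProb hε hm hδ
  have hcast : (D : ℝ) ≤ D' + 1 := by exact_mod_cast h
  -- The release probability drops by at most a factor `e^{-ε}`; since it is at most `1/2`,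
  -- the loss is absorbed by `e^ε - 1 ≥ (e^ε - e^{-ε}) / 2`.
  have hlow : Real.exp (-ε) * releaseProb ε m D' ≤ releaseProb ε m D := by
    simp only [releaseProb, if_pos (show D ≤ m by omega), if_pos hD'.le]
    rw [← mul_div_assoc, ← Real.exp_add]
    gcongr
    nlinarith
  have hsum : 2 ≤ Real.exp ε + Real.exp (-ε) := by
    linarith [Real.add_one_le_exp ε, Real.add_one_le_exp (-ε)]
  have he' : Real.exp (-ε) ≤ 1 := Real.exp_le_one_iff.2 (by linarith)
  have : 0 ≤ δ := le_trans (by positivity) hm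
  nlinarith [mul_le_mul_of_nonneg_right hq' (show 0 ≤ Real.exp ε - Real.exp (-ε) by linarith)]

end ReleaseProb

section SomeWithProb

variable {α : Type*}

noncomputable def someWithProb (p : ℝ) (a : α) : PMF (Option α) :=
  (PMF.ofFintype (fun b => bif b then min (ENNReal.ofReal p) 1 else 1 - min (ENNReal.ofReal p) 1)
    (by simp [add_tsub_cancel_of_le])).map fun b => bif b then some a else none

variable {p : ℝ} {a : α}

lemma someWithProb_apply_self (hp : p ≤ 1) : someWithProb p a (some a) = ENNReal.ofReal p := by
  simp [someWithProb, PMF.map_apply, hp]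

lemma someWithProb_apply_of_ne {b : α} (h : b ≠ a) : someWithProb p a (some b) = 0 := by
  simp [someWithProb, PMF.map_apply, h]

lemma prob_someWithProb (hp₀ : 0 ≤ p) (hp₁ : p ≤ 1) (O : Set (Option α))
    [Decidable (some a ∈ O)] [Decidable (none ∈ O)] :
    prob (someWithProb p a) O =
      (if some a ∈ O then p else 0) + (if none ∈ O then 1 - p else 0) := by
  have hp : ENNReal.ofReal p ≤ 1 := ENNReal.ofReal_le_one.2 hp₁
  rw [prob, someWithProb, PMF.toOuterMeasure_map_apply, PMF.toOuterMeasure_apply, tsum_bool]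
  by_cases hs : some a ∈ O <;> by_cases hn : none ∈ O <;>
    simp [hs, hn, hp, hp₀, tsub_add_cancel_of_le, ENNReal.toReal_sub_of_le]

lemma prob_someWithProb_le_exp_mul_add {p' ε δ : ℝ} {a' : α} (hp₀ : 0 ≤ p) (hp₁ : p ≤ 1)
    (hp'₀ : 0 ≤ p') (hp'₁ : p' ≤ 1) (hε : 0 ≤ ε) (hδ : 0 ≤ δ)
    (hsome : p ≤ Real.exp ε * p' + δ) (hnone : 1 - p ≤ Real.exp ε * (1 - p') + δ)
    (hne : a ≠ a' → p ≤ δ ∧ p' ≤ δ) (O : Set (Option α)) :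
    prob (someWithProb p a) O ≤ Real.exp ε * prob (someWithProb p' a') O + δ := by
  classical
  have he : 1 ≤ Real.exp ε := Real.one_le_exp_iff.2 hε
  rw [prob_someWithProb hp₀ hp₁, prob_someWithProb hp'₀ hp'₁]
  rcases eq_or_ne a a' with rfl | hne'
  · split_ifs <;> nlinarith
  · obtain ⟨hpδ, hp'δ⟩ := hne hne'
    split_ifs <;> nlinarith

end SomeWithProb

section Mechanism

variable {β : Type*} [DecidableEq β] {n : ℕ} (T : Finset (Fin n → β)) (hT : T.Nonempty)

noncomputable def codeMechanism (ε : ℝ) (m : ℕ) (x : Fin n → β) : PMF (Option (Fin n → β)) :=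
  someWithProb (releaseProb ε m (hammingDist x (nearestCodeword T hT x))) (nearestCodeword T hT x)

lemma codeMechanism_of_mem (ε : ℝ) (m : ℕ) {x : Fin n → β} (hx : x ∈ T) :
    codeMechanism T hT ε m x = someWithProb (1 / 2) x := by
  simp [codeMechanism, nearestCodeword_of_mem T hT hx]

lemma codeMechanism_diffPrivate {ε δ : ℝ} {m : ℕ} (hε : 0 ≤ ε)
    (hm : Real.exp (-(ε * m)) / 2 ≤ δ)
    (hsep : (T : Set (Fin n → β)).Pairwise fun x y => 2 * m + 1 < hammingDist x y) :
    DiffPrivate (codeMechanism T hT ε m) ε δ := by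
  intro x x' hxx' O
  have hd := hammingDist_le_one_of_neighbor hxx'
  have hx := hammingDist_nearestCodeword_le_add T hT x x'
  have hx' := hammingDist_nearestCodeword_le_add T hT x' x
  rw [hammingDist_comm x' x] at hx'
  -- A release probability above `δ` forces distance `< m`, so both inputs decode within `m`.
  have hnear (h : δ < releaseProb ε m (hammingDist x (nearestCodeword T hT x)) ∨
      δ < releaseProb ε m (hammingDist x' (nearestCodeword T hT x'))) :
      nearestCodeword T hT x = nearestCodeword T hT x' := by
    refine nearestCodeword_eq_of_add_le T hT hsep ?_
    rcases h with h | h <;> have := lt_of_lt_releaseProb hε hm h <;> omega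
  have hq₁ (D : ℕ) : releaseProb ε m D ≤ 1 := (releaseProb_le_half hε).trans (by norm_num)
  refine prob_someWithProb_le_exp_mul_add releaseProb_nonneg (hq₁ _) releaseProb_nonneg (hq₁ _)
    hε (le_trans (by positivity) hm) (releaseProb_le_exp_mul_add hε hm (by omega))
    (one_sub_releaseProb_le_exp_mul_add hε hm (by omega)) (fun hne => ?_) O
  exact ⟨not_lt.1 fun h => hne (hnear (.inl h)), not_lt.1 fun h => hne (hnear (.inr h))⟩

end Mechanism

section MaxInformation

variable {α Y : Type*}

lemma jointPMF_map_fst (μ : PMF α) (A : α → PMF Y) : (jointPMF μ A).map Prod.fst = μ := by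
  simp only [jointPMF, PMF.map_bind, PMF.map_comp]
  exact (congrArg μ.bind (funext fun x => PMF.map_const (A x) x)).trans μ.bind_pure

lemma jointPMF_map_snd (μ : PMF α) (A : α → PMF Y) : (jointPMF μ A).map Prod.snd = μ.bind A := by
  simp only [jointPMF, PMF.map_bind, PMF.map_comp]
  exact congrArg μ.bind (funext fun x => PMF.map_id (A x))

def optionDiag (α : Type*) : Set (α × Option α) := {p | p.2 = some p.1}

lemma toOuterMeasure_jointPMF_optionDiag (μ : PMF α) (A : α → PMF (Option α)) :
    (jointPMF μ A).toOuterMeasure (optionDiag α) = ∑' x, μ x * A x (some x) := by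
  rw [jointPMF, PMF.toOuterMeasure_bind_apply]
  congr! with x
  rw [PMF.toOuterMeasure_map_apply, ← PMF.toOuterMeasure_apply_singleton]
  rfl

variable {μ : PMF α} {A : α → PMF (Option α)}

lemma prob_jointPMF_optionDiag (hA : ∀ x ∈ μ.support, A x = someWithProb (1 / 2) x) :
    prob (jointPMF μ A) (optionDiag α) = 1 / 2 := by
  have h (x : α) : μ x * A x (some x) = μ x * ENNReal.ofReal (1 / 2) := by
    by_cases hx : x ∈ μ.support
    · rw [hA x hx, someWithProb_apply_self (by norm_num)]
    · rw [(μ.apply_eq_zero_iff x).2 hx, zero_mul, zero_mul]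
  rw [prob, toOuterMeasure_jointPMF_optionDiag, tsum_congr h, ENNReal.tsum_mul_right,
    PMF.tsum_coe, one_mul, ENNReal.toReal_ofReal (by norm_num)]

lemma bind_apply_some (hA : ∀ x ∈ μ.support, A x = someWithProb (1 / 2) x) (a : α) :
    μ.bind A (some a) = μ a * ENNReal.ofReal (1 / 2) := by
  classical
  have h (x : α) : μ x * A x (some a) = if x = a then μ a * ENNReal.ofReal (1 / 2) else 0 := by
    by_cases hx : x ∈ μ.support
    · split_ifs with hxa
      · rw [hxa, hA a (hxa ▸ hx), someWithProb_apply_self (by norm_num)]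
      · rw [hA x hx, someWithProb_apply_of_ne (Ne.symm hxa), mul_zero]
    · have h0 := (μ.apply_eq_zero_iff x).2 hx
      split_ifs with hxa
      · rw [← hxa, h0, zero_mul, zero_mul]
      · rw [h0, zero_mul]
  rw [PMF.bind_apply, tsum_congr h, tsum_ite_eq]

lemma prob_indepPair_optionDiag_le (hA : ∀ x ∈ μ.support, A x = someWithProb (1 / 2) x)
    {c : ℝ≥0∞} (hc : c ≠ ⊤) (hμ : ∀ x, μ x ≤ c) :
    prob (indepPair μ (μ.bind A)) (optionDiag α) ≤ c.toReal / 2 := by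
  have h : (indepPair μ (μ.bind A)).toOuterMeasure (optionDiag α) ≤
      c * ENNReal.ofReal (1 / 2) := by
    rw [show indepPair μ (μ.bind A) = jointPMF μ fun _ => μ.bind A from rfl,
      toOuterMeasure_jointPMF_optionDiag]
    calc ∑' x, μ x * μ.bind A (some x) = ∑' x, μ x * (μ x * ENNReal.ofReal (1 / 2)) := by
          simp_rw [bind_apply_some hA]
      _ ≤ ∑' x, μ x * (c * ENNReal.ofReal (1 / 2)) :=
          ENNReal.tsum_le_tsum fun x => by gcongr; exact hμ x
      _ = c * ENNReal.ofReal (1 / 2) := by rw [ENNReal.tsum_mul_right, PMF.tsum_coe, one_mul]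
  calc prob (indepPair μ (μ.bind A)) (optionDiag α) ≤ (c * ENNReal.ofReal (1 / 2)).toReal :=
        ENNReal.toReal_mono (ENNReal.mul_ne_top hc ENNReal.ofReal_ne_top) h
    _ = c.toReal / 2 := by rw [ENNReal.toReal_mul, ENNReal.toReal_ofReal (by norm_num)]; ring

lemma not_maxInfoLe_jointPMF (hA : ∀ x ∈ μ.support, A x = someWithProb (1 / 2) x)
    {c : ℝ≥0∞} (hc : c ≠ ⊤) (hμ : ∀ x, μ x ≤ c) {b k : ℝ}
    (h : 2 ^ k * (c.toReal / 2) < 1 / 2 - b) : ¬ MaxInfoLe (jointPMF μ A) b k := by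
  intro hmax
  have hpos : 0 ≤ 2 ^ k * (c.toReal / 2) := by positivity
  have := hmax (optionDiag α) (by rw [prob_jointPMF_optionDiag hA]; linarith)
  rw [prob_jointPMF_optionDiag hA, jointPMF_map_fst, jointPMF_map_snd] at this
  have := mul_le_mul_of_nonneg_left (prob_indepPair_optionDiag_le hA hc hμ)
    (Real.rpow_nonneg zero_le_two k)
  linarith

end MaxInformation

section Parameters

variable {ε δ : ℝ}

noncomputable def threshold (ε δ : ℝ) : ℕ := ⌈Real.logb 2 (1 / δ) / ε⌉₊

noncomputable def redundancy (ε δ : ℝ) (n : ℕ) : ℕ := (2 * threshold ε δ + 1) * (Nat.log 2 n + 1)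

lemma log_le_logb_two {x : ℝ} (hx : 1 ≤ x) : Real.log x ≤ Real.logb 2 x := by
  rw [Real.logb, le_div_iff₀ (Real.log_pos one_lt_two)]
  nlinarith [Real.log_nonneg hx, Real.log_two_lt_d9]

lemma exp_neg_mul_threshold_div_two_le (hε : 0 < ε) (hδ : 0 < δ) (hδ₁ : δ ≤ 1) :
    Real.exp (-(ε * threshold ε δ)) / 2 ≤ δ := by
  have h : Real.log (1 / δ) ≤ ε * threshold ε δ :=
    calc Real.log (1 / δ) ≤ Real.logb 2 (1 / δ) := log_le_logb_two (one_le_one_div hδ hδ₁)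
      _ ≤ ε * threshold ε δ := by
        rw [mul_comm, ← div_le_iff₀ hε]
        exact Nat.le_ceil _
  calc Real.exp (-(ε * threshold ε δ)) / 2 ≤ Real.exp (-(ε * threshold ε δ)) :=
        half_le_self (Real.exp_pos _).le
    _ ≤ Real.exp (-Real.log (1 / δ)) := by gcongr
    _ = δ := by rw [Real.exp_neg, Real.exp_log (by positivity), one_div, inv_inv]

lemma threshold_mul_le (hε : 0 < ε) (hδ : 0 < δ) (hδ₁ : δ ≤ 1) :
    (threshold ε δ : ℝ) * ε ≤ Real.logb 2 (1 / δ) + ε := by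
  have h := Nat.ceil_lt_add_one
    (div_nonneg (Real.logb_nonneg one_lt_two (one_le_one_div hδ hδ₁)) hε.le)
  have := mul_lt_mul_of_pos_right h hε
  rw [add_mul, div_mul_cancel₀ _ hε.ne', one_mul] at this
  exact this.le

lemma redundancy_le {n : ℕ} (hn : 2 ≤ n) (hε : 0 < ε) (hε₂ : ε ≤ 1 / 2) (hδ : 0 < δ)
    (hδ₄ : δ ≤ 1 / 4) :
    (redundancy ε δ n : ℝ) ≤ 6 * (Real.logb 2 (1 / δ) * Real.logb 2 n) / ε := by
  have hA : 2 ≤ Real.logb 2 (1 / δ) := by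
    rw [Real.le_logb_iff_rpow_le one_lt_two (by positivity), le_div_iff₀ hδ,
      show (2 : ℝ) ^ (2 : ℝ) = 4 by norm_num]
    linarith
  have hL : (Nat.log 2 n : ℝ) + 1 ≤ 2 * Real.logb 2 n := by
    have h₁ : (1 : ℝ) ≤ Nat.log 2 n := by exact_mod_cast Nat.log_pos one_lt_two hn
    have h₂ : (Nat.log 2 n : ℝ) ≤ Real.logb 2 n := by exact_mod_cast Real.natLog_le_logb n 2
    linarith
  have hm := threshold_mul_le hε hδ (by linarith)
  rw [le_div_iff₀ hε, redundancy]
  push_cast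
  nlinarith

lemma succ_pow_le_two_pow_mul (n R : ℕ) : (n + 1) ^ R ≤ 2 ^ (R * (Nat.log 2 n + 1)) := by
  rw [pow_mul']
  exact Nat.pow_le_pow_left (Nat.lt_pow_succ_log_self one_lt_two n) R

lemma two_rpow_mul_inv_div_two_lt {N β k : ℝ} {n r : ℕ} (hN : (2 : ℝ) ^ n ≤ N * 2 ^ r)
    (hβ : 0 < β) (hk : k < n - 1 - r - Real.logb 2 (1 / β)) : 2 ^ k * (N⁻¹ / 2) < β := by
  have hN₀ : 0 < N := pos_of_mul_pos_left ((pow_pos two_pos n).trans_le hN) (by positivity)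
  have h2k : (2 : ℝ) ^ k < N * β / 2 :=
    calc (2 : ℝ) ^ k < 2 ^ ((n : ℝ) - 1 - r - Real.logb 2 (1 / β)) :=
          Real.rpow_lt_rpow_of_exponent_lt one_lt_two hk
      _ = 2 ^ n * β / (2 * 2 ^ r) := by
          rw [Real.rpow_sub two_pos, Real.rpow_sub two_pos, Real.rpow_sub two_pos,
            Real.rpow_logb two_pos (by norm_num) (by positivity), Real.rpow_natCast,
            Real.rpow_natCast, Real.rpow_one]
          field_simp
      _ ≤ N * 2 ^ r * β / (2 * 2 ^ r) := by gcongr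
      _ = N * β / 2 := by field_simp
  calc (2 : ℝ) ^ k * (N⁻¹ / 2) < N * β / 2 * (N⁻¹ / 2) := by gcongr
    _ = β / 4 := by field_simp; ring
    _ < β := by linarith

end Parameters

end MaxInfoLowerBound

open MaxInfoLowerBound Finset in
/-- **Corollary 4.2.**  There is an absolute constant `c > 0` such that for all
`ε ∈ (0,1/2]`, `δ ∈ (0,1/4]` and `n > 64e`, there exist an `(ε,δ)`-differentially private
mechanism `C : {0,1}^n → {0,1}^n ∪ {⊥}`, a distribution `S` over `{0,1}^n`, and an integer `r`
with `r ≤ c·log₂(1/δ)·log₂(n)/ε`, such that with `X ∼ S`,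
`I_∞^{β₂}(X; C(X)) ≥ n - 1 - r - log₂(1/β₁)` for all `β₁ ∈ (0, 1/2 - δ)` and
`β₂ ∈ (0, 1/2 - δ - β₁)` (i.e. no bound `I_∞^{β₂} ≤ k` with `k < n - 1 - r - log₂(1/β₁)` can
hold).  In particular, `(ε,δ)`-differential privacy alone implies no nontrivial
max-information bound over arbitrary input distributions. -/
theorem stmt_15 : ∃ c : ℝ, 0 < c ∧
    ∀ (n : ℕ) (ε δ : ℝ), 64 * Real.exp 1 < (n : ℝ) →
      0 < ε → ε ≤ 1 / 2 → 0 < δ → δ ≤ 1 / 4 →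
      ∃ (C : (Fin n → ZMod 2) → PMF (Option (Fin n → ZMod 2)))
        (S : PMF (Fin n → ZMod 2)) (r : ℕ),
        DiffPrivate C ε δ ∧
        (r : ℝ) ≤ c * (Real.logb 2 (1 / δ) * Real.logb 2 n) / ε ∧
        ∀ β₁ β₂ : ℝ, 0 < β₁ → β₁ < 1 / 2 - δ → 0 < β₂ → β₂ < 1 / 2 - δ - β₁ →
          ∀ k : ℝ, k < (n : ℝ) - 1 - r - Real.logb 2 (1 / β₁) →
            ¬ MaxInfoLe (jointPMF S C) β₂ k := by
  refine ⟨6, by norm_num, fun n ε δ hn hε hε₂ hδ hδ₄ => ?_⟩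
  have hn₂ : 2 ≤ n := by
    have := Real.exp_one_gt_d9
    exact_mod_cast (show (2 : ℝ) ≤ n by linarith)
  obtain ⟨T, hT, hsep, hcard⟩ :=
    exists_separated_code_two_pow_le_card_mul n (2 * threshold ε δ + 1)
  have hcard' : (2 : ℝ) ^ n ≤ #T * 2 ^ redundancy ε δ n := by
    exact_mod_cast hcard.trans (Nat.mul_le_mul_left _ (succ_pow_le_two_pow_mul n _))
  refine ⟨codeMechanism T hT ε (threshold ε δ), PMF.uniformOfFinset T hT, redundancy ε δ n,
    codeMechanism_diffPrivate T hT hε.le (exp_neg_mul_threshold_div_two_le hε hδ (by linarith))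
      hsep, redundancy_le hn₂ hε hε₂ hδ hδ₄, fun β₁ β₂ hβ₁ _ _ hβ₂ k hk => ?_⟩
  refine not_maxInfoLe_jointPMF (c := (#T : ℝ≥0∞)⁻¹)
    (fun x hx => codeMechanism_of_mem T hT ε _ ((PMF.mem_support_uniformOfFinset_iff hT x).1 hx))
    (ENNReal.inv_ne_top.2 (by simpa using hT.card_pos.ne'))
    (fun x => by rw [PMF.uniformOfFinset_apply]; split_ifs <;> simp) ?_
  rw [ENNReal.toReal_inv, ENNReal.toReal_natCast]
  linarith [two_rpow_mul_inv_div_two_lt hcard' hβ₁ hk]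
end

section
/- Let φ : X^n → ℝ be a test statistic, P a distribution over X, and p : ℝ → [0,1] defined by p(a) = Pr_{x ~ P^n}[φ(x) ≥ a]. Assume that when X ~ P^n, the random variable p(φ(X)) is uniformly distributed on [0,1]. Then if the composition p ∘ φ : X^n → [0,1] has sensitivity Δ (i.e., changing a single entry of the input changes p ∘ φ by at most Δ), it must hold that Δ ≥ 0.37/√n. More precisely, for every δ ∈ (0, 1/2), Δ ≥ (1/2 − δ)/√((n/2)·ln(1/δ)). -/
/-!
Under `P^n` the statistic `p ∘ φ` is uniform on `[0, 1]`, so its variance is `1/12`. A function of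
`n` independent coordinates that moves by at most `Δ` when one coordinate changes has variance at
most `n Δ² / 4` (Efron–Stein): the law of total variance peels off one coordinate, and the
conditional mean, again of oscillation at most `Δ`, has variance at most `Δ² / 4` by Popoviciu's
inequality. Hence `n Δ² ≥ 1/3`, which gives both bounds, the second through
`log (1/d) ≥ 6 (1/2 - d)²`.
-/

open MeasureTheory ProbabilityTheory

section Variance

variable {α β : Type*} [MeasurableSpace α] [MeasurableSpace β] {μ : Measure α} {ν : Measure β}
  [IsProbabilityMeasure μ] [IsProbabilityMeasure ν]

lemma variance_le_sq_half_of_abs_sub_le {g : α → ℝ} (hg : AEMeasurable g μ) {Δ : ℝ}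
    (h : ∀ x y, |g x - g y| ≤ Δ) : Var[g; μ] ≤ (Δ / 2) ^ 2 := by
  have : Nonempty α := nonempty_of_isProbabilityMeasure μ
  have hbdd : BddBelow (Set.range g) :=
    ⟨g (Classical.arbitrary α) - Δ, by
      rintro _ ⟨x, rfl⟩; linarith [(abs_le.mp (h (Classical.arbitrary α) x)).2]⟩
  have hmem : ∀ x, g x ∈ Set.Icc (⨅ y, g y) ((⨅ y, g y) + Δ) := fun x =>
    ⟨ciInf_le hbdd x, by
      have : g x - Δ ≤ ⨅ y, g y := le_ciInf fun y => by linarith [(abs_le.mp (h x y)).2]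
      linarith⟩
  simpa using variance_le_sq_of_bounded (ae_of_all μ hmem) hg

lemma integral_mem_Icc_of_forall_mem_Icc {g : α → ℝ} (hg : Integrable g μ) {a b : ℝ}
    (h : ∀ x, g x ∈ Set.Icc a b) : ∫ x, g x ∂μ ∈ Set.Icc a b := by
  constructor
  · simpa using integral_mono (integrable_const a) hg fun x => (h x).1
  · simpa using integral_mono hg (integrable_const b) fun x => (h x).2

lemma abs_integral_sub_integral_le {g h : α → ℝ} (hg : Integrable g μ) (hh : Integrable h μ)
    {Δ : ℝ} (hgh : ∀ x, |g x - h x| ≤ Δ) : |∫ x, g x ∂μ - ∫ x, h x ∂μ| ≤ Δ := by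
  rw [← integral_sub hg hh]
  simpa using norm_integral_le_of_norm_le_const (μ := μ)
    (ae_of_all μ fun x => (Real.norm_eq_abs _).trans_le (hgh x))

lemma variance_prod_eq_integral_variance_add_variance_integral {G : α × β → ℝ}
    (hG : Measurable G) {a b : ℝ} (hGab : ∀ p, G p ∈ Set.Icc a b) :
    Var[G; μ.prod ν] =
      ∫ x, Var[fun y => G (x, y); ν] ∂μ + Var[fun x => ∫ y, G (x, y) ∂ν; μ] := by
  have hL2 : MemLp G 2 (μ.prod ν) := memLp_of_bounded (ae_of_all _ hGab) hG.aestronglyMeasurable 2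
  have hslice : ∀ x, MemLp (fun y => G (x, y)) 2 ν := fun x =>
    memLp_of_bounded (ae_of_all _ fun y => hGab (x, y))
      (hG.comp measurable_prodMk_left).aestronglyMeasurable 2
  have hmean : MemLp (fun x => ∫ y, G (x, y) ∂ν) 2 μ :=
    memLp_of_bounded (ae_of_all _ fun x => integral_mem_Icc_of_forall_mem_Icc
      ((hslice x).integrable one_le_two) fun y => hGab (x, y))
      hG.stronglyMeasurable.integral_prod_right'.aestronglyMeasurable 2
  have hint := hL2.integrable one_le_two
  have hint_sq := hL2.integrable_sq
  rw [variance_eq_sub hL2, variance_eq_sub hmean]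
  simp_rw [variance_eq_sub (hslice _)]
  simp only [Pi.pow_apply]
  rw [integral_sub hint_sq.integral_prod_left hmean.integrable_sq, integral_prod _ hint,
    integral_prod _ hint_sq]
  ring

end Variance

section Tensorization

variable {X : Type*} [MeasurableSpace X] (P : Measure X) [IsProbabilityMeasure P]

lemma measurePreserving_fin_cons {n : ℕ} :
    MeasurePreserving (fun p : X × (Fin n → X) => (Fin.cons p.1 p.2 : Fin (n + 1) → X))
      (P.prod (Measure.pi fun _ : Fin n => P)) (Measure.pi fun _ : Fin (n + 1) => P) := by
  convert (measurePreserving_piFinSuccAbove (fun _ : Fin (n + 1) => P) 0).symm with p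
  simp [MeasurableEquiv.piFinSuccAbove_symm_apply, Fin.consEquiv]

theorem variance_pi_le_of_abs_sub_update_le {a b Δ : ℝ} :
    ∀ {n : ℕ} {f : (Fin n → X) → ℝ}, Measurable f → (∀ x, f x ∈ Set.Icc a b) →
      (∀ x i v, |f x - f (Function.update x i v)| ≤ Δ) →
      Var[f; Measure.pi fun _ : Fin n => P] ≤ n * (Δ / 2) ^ 2
  | 0, f, _, _, _ => by
    have hconst : f = fun _ => f isEmptyElim := funext fun x => congrArg f (Subsingleton.elim _ _)
    rw [hconst]
    simp [variance_eq_integral]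
  | n + 1, f, hf, hfab, hsens => by
    set μ := Measure.pi fun _ : Fin n => P
    set G : X × (Fin n → X) → ℝ := fun p => f (Fin.cons p.1 p.2)
    have hG : Measurable G := hf.comp (measurePreserving_fin_cons P).measurable
    have hGint : ∀ x, Integrable (fun y => G (x, y)) μ := fun x =>
      Integrable.of_mem_Icc (μ := μ) a b (hG.comp measurable_prodMk_left).aemeasurable
        (ae_of_all _ fun y => hfab _)
    have hslice : ∀ x, Var[fun y => G (x, y); μ] ≤ n * (Δ / 2) ^ 2 := fun x =>
      variance_pi_le_of_abs_sub_update_le (hG.comp measurable_prodMk_left) (fun y => hfab _)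
        fun y i v => by simpa only [G, Fin.cons_update] using hsens (Fin.cons x y) i.succ v
    have hmean : Var[fun x => ∫ y, G (x, y) ∂μ; P] ≤ (Δ / 2) ^ 2 :=
      variance_le_sq_half_of_abs_sub_le
        hG.stronglyMeasurable.integral_prod_right'.measurable.aemeasurable fun x x' =>
          abs_integral_sub_integral_le (hGint x) (hGint x') fun y => by
            simpa only [G, Fin.update_cons_zero] using hsens (Fin.cons x y) 0 x'
    have hslice_int : ∫ x, Var[fun y => G (x, y); μ] ∂P ≤ n * (Δ / 2) ^ 2 := by
      simpa using integral_mono_of_nonneg (ae_of_all P fun x => variance_nonneg _ _)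
        (integrable_const ((n : ℝ) * (Δ / 2) ^ 2)) (ae_of_all P hslice)
    rw [← (measurePreserving_fin_cons P).variance_fun_comp hf.aemeasurable,
      variance_prod_eq_integral_variance_add_variance_integral hG fun p => hfab _]
    push_cast
    linarith

end Tensorization

section Uniform

variable {Ω : Type*} [MeasurableSpace Ω] {μ : Measure Ω} [IsProbabilityMeasure μ]

lemma map_eq_volume_restrict_Icc_of_cdf {f : Ω → ℝ} (hf : Measurable f)
    (hf01 : ∀ x, f x ∈ Set.Icc 0 1)
    (hcdf : ∀ c, 0 ≤ c → c ≤ 1 → μ {x | f x ≤ c} = ENNReal.ofReal c) :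
    μ.map f = volume.restrict (Set.Icc 0 1) := by
  refine Measure.ext_of_Iic _ _ fun c => ?_
  have hinter : Set.Iic c ∩ Set.Icc 0 1 = Set.Icc 0 (min c 1) := by ext; simp; tauto
  rw [Measure.map_apply hf measurableSet_Iic, Measure.restrict_apply measurableSet_Iic, hinter,
    Real.volume_Icc, sub_zero]
  rcases lt_or_ge c 0 with hc0 | hc0
  · have hempty : f ⁻¹' Set.Iic c = ∅ :=
      Set.eq_empty_of_forall_notMem fun x hx => (hc0.trans_le (hf01 x).1).not_ge hx
    simp [hempty, ENNReal.ofReal_of_nonpos hc0.le]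
  rcases le_or_gt c 1 with hc1 | hc1
  · rw [min_eq_left hc1]
    exact hcdf c hc0 hc1
  · have huniv : f ⁻¹' Set.Iic c = Set.univ :=
      Set.eq_univ_of_forall fun x => (hf01 x).2.trans hc1.le
    simp [huniv, hc1.le]

lemma variance_id_volume_restrict_Icc_zero_one :
    Var[id; volume.restrict (Set.Icc (0 : ℝ) 1)] = 1 / 12 := by
  have : IsProbabilityMeasure (volume.restrict (Set.Icc (0 : ℝ) 1)) := ⟨by simp⟩
  have hL2 : MemLp id 2 (volume.restrict (Set.Icc (0 : ℝ) 1)) :=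
    memLp_of_bounded (ae_restrict_of_forall_mem measurableSet_Icc fun _ hx => hx)
      aestronglyMeasurable_id 2
  rw [variance_eq_sub hL2]
  simp only [Pi.pow_apply, id, integral_Icc_eq_integral_Ioc,
    ← intervalIntegral.integral_of_le zero_le_one, integral_pow, integral_id]
  norm_num

lemma variance_eq_one_div_twelve_of_cdf {f : Ω → ℝ} (hf : Measurable f)
    (hf01 : ∀ x, f x ∈ Set.Icc 0 1)
    (hcdf : ∀ c, 0 ≤ c → c ≤ 1 → μ {x | f x ≤ c} = ENNReal.ofReal c) :
    Var[f; μ] = 1 / 12 := by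
  rw [← variance_id_map hf.aemeasurable, map_eq_volume_restrict_Icc_of_cdf hf hf01 hcdf,
    variance_id_volume_restrict_Icc_zero_one]

end Uniform

lemma six_mul_sq_le_log_inv {d : ℝ} (hd0 : 0 < d) (hd1 : d < 1 / 2) :
    6 * (1 / 2 - d) ^ 2 ≤ Real.log (1 / d) := by
  set s := √d
  have hs0 : 0 < s := Real.sqrt_pos.mpr hd0
  have hsd : s ^ 2 = d := Real.sq_sqrt hd0.le
  have hlog : 2 * (1 - s) ≤ Real.log (1 / d) := by
    rw [← hsd, one_div, Real.log_inv, Real.log_pow]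
    push_cast
    linarith [Real.log_le_sub_one_of_pos hs0]
  nlinarith [mul_nonneg (by linarith : (0 : ℝ) ≤ 1 / 2 - s ^ 2) (sq_nonneg s),
    sq_nonneg (s - 1 / 3)]

lemma div_sqrt_le_of_sq_le_mul_sq {x D Δ : ℝ} (hΔ : 0 ≤ Δ) (h : x ^ 2 ≤ D * Δ ^ 2) :
    x / √D ≤ Δ := by
  rcases le_or_gt D 0 with hD | hD
  · simp [Real.sqrt_eq_zero'.mpr hD, hΔ]
  rw [div_le_iff₀ (Real.sqrt_pos.mpr hD)]
  calc x ≤ |x| := le_abs_self x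
    _ ≤ √(D * Δ ^ 2) := Real.abs_le_sqrt h
    _ = Δ * √D := by rw [Real.sqrt_mul hD.le, Real.sqrt_sq hΔ, mul_comm]

/-- **Lemma B.1.**  Let `φ : X^n → ℝ` be a test statistic, `P` a distribution
over `X`, and `p(a) = Pr_{x ∼ P^n}[φ(x) ≥ a]`.  Assume that when `X ∼ P^n`, the random
variable `p(φ(X))` is uniformly distributed on `[0,1]` (stated via its CDF).  If `p ∘ φ` has
sensitivity `Δ` (changing a single entry of the input changes `p ∘ φ` by at most `Δ`), then
`Δ ≥ 0.37/√n`, and more precisely, for every `d ∈ (0, 1/2)`,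
`Δ ≥ (1/2 - d)/√((n/2)·ln(1/d))`. -/
theorem stmt_16 {𝓧 : Type*} [MeasurableSpace 𝓧] (n : ℕ) (P : Measure 𝓧)
    [IsProbabilityMeasure P] (φ : (Fin n → 𝓧) → ℝ) (hφ : Measurable φ) (Δ : ℝ)
    (hunif : ∀ c : ℝ, 0 ≤ c → c ≤ 1 →
      (Measure.pi fun _ : Fin n => P)
          {x | ((Measure.pi fun _ : Fin n => P) {z | φ x ≤ φ z}).toReal ≤ c} =
        ENNReal.ofReal c)
    (hsens : ∀ (x : Fin n → 𝓧) (i : Fin n) (v : 𝓧),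
      |((Measure.pi fun _ : Fin n => P) {z | φ x ≤ φ z}).toReal -
          ((Measure.pi fun _ : Fin n => P) {z | φ (Function.update x i v) ≤ φ z}).toReal| ≤ Δ) :
    0.37 / Real.sqrt n ≤ Δ ∧
      ∀ d : ℝ, 0 < d → d < 1 / 2 →
        (1 / 2 - d) / Real.sqrt ((n / 2) * Real.log (1 / d)) ≤ Δ := by
  set μ := Measure.pi fun _ : Fin n => P
  set p : (Fin n → 𝓧) → ℝ := fun x => (μ {z | φ x ≤ φ z}).toReal
  have hp : Measurable p := by
    refine Antitone.measurable (f := fun a => (μ {z | a ≤ φ z}).toReal) ?_ |>.comp hφ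
    exact fun a b hab => ENNReal.toReal_mono (measure_ne_top μ _)
      (measure_mono fun z hz => hab.trans hz)
  have hp01 : ∀ x, p x ∈ Set.Icc 0 1 := fun x => ⟨ENNReal.toReal_nonneg, measureReal_le_one⟩
  have hvar : (1 : ℝ) / 3 ≤ n * Δ ^ 2 := by
    have := variance_pi_le_of_abs_sub_update_le P hp hp01 hsens
    rw [variance_eq_one_div_twelve_of_cdf hp hp01 hunif] at this
    linarith
  have hn : 0 < n := Nat.pos_of_ne_zero fun h => by norm_num [h] at hvar
  have hΔ : 0 ≤ Δ := by
    obtain ⟨x⟩ : Nonempty (Fin n → 𝓧) := nonempty_of_isProbabilityMeasure μ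
    exact (abs_nonneg _).trans (hsens x ⟨0, hn⟩ (x ⟨0, hn⟩))
  refine ⟨div_sqrt_le_of_sq_le_mul_sq hΔ (by linarith), fun d hd0 hd1 => ?_⟩
  refine div_sqrt_le_of_sq_le_mul_sq hΔ ?_
  have hlog := six_mul_sq_le_log_inv hd0 hd1
  have hlog_nonneg : 0 ≤ Real.log (1 / d) := hlog.trans' (by positivity)
  linarith [mul_le_mul_of_nonneg_right hvar hlog_nonneg]
end
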